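/- arXiv:2309.14315 — 2 statements merged into one kernel-verified Lean document; each statement's English description precedes it below -/
import Mathlib

section
/- Let G(z) = Σ_{n≥0} m_n z^{-n-1} and K(z) = z^{-1} + Σ_{p≥1} κ_p z^{p-1} be formal Laurent series (with m_0 = 1) related by the moment–free-cumulant relation m_n = Σ_{π ∈ NC(n)} ∏_{blocks V of π} κ_{|V|}. Then K(G(z)) = z as formal Laurent series in z^{-1}. -/
open scoped Classical

/-- A partition of `{0, …, n-1}` is non-crossing if there are no
`a < b < c < d` with `a, c` in one block and `b, d` in a different block. -/
def IsNonCrossing {n : ℕ} (π : Finpartition (Finset.univ : Finset (Fin n))) : Prop :=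
  ¬ ∃ a b c d : Fin n, a < b ∧ b < c ∧ c < d ∧
    ∃ B ∈ π.parts, ∃ B' ∈ π.parts, B ≠ B' ∧ a ∈ B ∧ c ∈ B ∧ b ∈ B' ∧ d ∈ B'

/-- `RSeries κ g = Σ_{k≥1} κ_k g^{k-1}` for a power series `g` with zero
constant coefficient (so each coefficient is the displayed finite sum). -/
noncomputable def RSeries (κ : ℕ → ℂ) (g : PowerSeries ℂ) : PowerSeries ℂ :=
  PowerSeries.mk fun n =>
    ∑ k ∈ Finset.Icc 1 (n + 1), κ k * PowerSeries.coeff n (g ^ (k - 1))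

open Finset PowerSeries

noncomputable section NCAux

/-- The set of non-crossing partitions. -/
def NCs (n : ℕ) : Finset (Finpartition (Finset.univ : Finset (Fin n))) :=
  Finset.univ.filter (fun π => IsNonCrossing π)

/-- weight of a block, with extra weight `r` on the block containing `0`. -/
def blockWt (κ : ℕ → ℂ) (r : ℕ) {n : ℕ} (V : Finset (Fin n)) : ℂ :=
  κ (V.card + if ∃ v ∈ V, (v : ℕ) = 0 then r else 0)

/-- Total weight of all non-crossing partitions of `{0,…,n-1}`. -/
def Wt (κ : ℕ → ℂ) (r n : ℕ) : ℂ :=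
  ∑ π ∈ NCs n, ∏ V ∈ π.parts, blockWt κ r V

lemma blockWt_zero (κ : ℕ → ℂ) {n : ℕ} (V : Finset (Fin n)) :
    blockWt κ 0 V = κ V.card := by
  simp [blockWt]

lemma Wt_zero (κ : ℕ → ℂ) (n : ℕ) :
    Wt κ 0 n = ∑ π ∈ NCs n, ∏ V ∈ π.parts, κ V.card := by
  simp [Wt, blockWt_zero]

lemma parts_eq_empty_of_zero (π : Finpartition (Finset.univ : Finset (Fin 0))) :
    π.parts = ∅ := by
  exact Finpartition.parts_eq_empty_iff.2 (by simp)

lemma Wt_nil (κ : ℕ → ℂ) (r : ℕ) : Wt κ r 0 = 1 := by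
  have huniq : ∀ π π' : Finpartition (Finset.univ : Finset (Fin 0)), π = π' := by
    intro π π'
    exact Finpartition.ext (by rw [parts_eq_empty_of_zero, parts_eq_empty_of_zero])
  have hne : (NCs 0).Nonempty := by
    refine ⟨(Finpartition.empty _).copy (by simp), ?_⟩
    simp only [NCs, Finset.mem_filter, Finset.mem_univ, true_and]
    rintro ⟨a, _⟩
    exact a.elim0
  obtain ⟨π₀, hπ₀⟩ := hne
  have : NCs 0 = {π₀} := by
    apply Finset.eq_singleton_iff_unique_mem.2
    exact ⟨hπ₀, fun x _ => huniq x π₀⟩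
  rw [Wt, this, Finset.sum_singleton, parts_eq_empty_of_zero, Finset.prod_empty]


/- ### Transport of partitions along shift embeddings -/

def fshift {a n : ℕ} (s : ℕ) (h : a + s ≤ n) : Fin a → Fin n :=
  fun i => ⟨i.val + s, by have := i.isLt; omega⟩

lemma fshift_val {a n : ℕ} (s : ℕ) (h : a + s ≤ n) (i : Fin a) :
    (fshift s h i).val = i.val + s := rfl

lemma fshift_strictMono {a n : ℕ} (s : ℕ) (h : a + s ≤ n) : StrictMono (fshift s h) := by
  intro i i' hii
  rw [Fin.lt_def] at hii ⊢
  rw [fshift_val, fshift_val]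
  omega

lemma fshift_injective {a n : ℕ} (s : ℕ) (h : a + s ≤ n) :
    Function.Injective (fshift s h) :=
  (fshift_strictMono s h).injective

lemma val_of_mem_image_fshift {a n : ℕ} {s : ℕ} {h : a + s ≤ n} {V : Finset (Fin a)}
    {x : Fin n} (hx : x ∈ V.image (fshift s h)) : s ≤ x.val ∧ x.val < a + s := by
  obtain ⟨i, _, rfl⟩ := Finset.mem_image.1 hx
  have := i.isLt
  rw [fshift_val]
  omega

def preimP {a n : ℕ} (e : Fin a → Fin n) (V : Finset (Fin n)) : Finset (Fin a) :=
  Finset.univ.filter (fun i => e i ∈ V)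

lemma mem_preimP {a n : ℕ} {e : Fin a → Fin n} {V : Finset (Fin n)} {i : Fin a} :
    i ∈ preimP e V ↔ e i ∈ V := by simp [preimP]

lemma preimP_image {a n : ℕ} {e : Fin a → Fin n} (he : Function.Injective e)
    (W : Finset (Fin a)) : preimP e (W.image e) = W := by
  ext i
  simp only [mem_preimP, Finset.mem_image]
  exact ⟨fun ⟨x, hx, hxi⟩ => he hxi ▸ hx, fun hi => ⟨i, hi, rfl⟩⟩

lemma image_preimP {a n : ℕ} (e : Fin a → Fin n) (V : Finset (Fin n))
    (hV : ∀ x ∈ V, ∃ i, e i = x) : (preimP e V).image e = V := by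
  ext x
  simp only [Finset.mem_image, mem_preimP]
  constructor
  · rintro ⟨i, hi, rfl⟩; exact hi
  · intro hx
    obtain ⟨i, rfl⟩ := hV x hx
    exact ⟨i, hx, rfl⟩

/-- Restriction of a partition of `Fin n` along an embedding `Fin a → Fin n`. -/
def restr {a n : ℕ} (e : Fin a → Fin n)
    (π : Finpartition (Finset.univ : Finset (Fin n))) :
    Finpartition (Finset.univ : Finset (Fin a)) :=
  Finpartition.ofErase (π.parts.image (preimP e))
    (by
      rw [Finset.supIndep_iff_pairwiseDisjoint]
      intro x hx y hy hxy
      simp only [Finset.coe_image, Set.mem_image, Finset.mem_coe] at hx hy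
      obtain ⟨V, hV, rfl⟩ := hx
      obtain ⟨V', hV', rfl⟩ := hy
      have hVV' : V ≠ V' := fun h => hxy (by rw [h])
      have hd := π.disjoint hV hV' hVV'
      simp only [Function.onFun, id_eq] at hd ⊢
      rw [Finset.disjoint_left] at hd ⊢
      intro i hi hi'
      exact hd (mem_preimP.1 hi) (mem_preimP.1 hi'))
    (by
      apply Finset.Subset.antisymm (Finset.subset_univ _)
      intro i _
      obtain ⟨V, hV, hiV⟩ := π.exists_mem (Finset.mem_univ (e i))
      rw [Finset.mem_sup]
      exact ⟨preimP e V, Finset.mem_image_of_mem _ hV, mem_preimP.2 hiV⟩)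

lemma restr_parts {a n : ℕ} (e : Fin a → Fin n)
    (π : Finpartition (Finset.univ : Finset (Fin n))) :
    (restr e π).parts = (π.parts.image (preimP e)).erase ∅ := rfl

lemma mem_restr_parts {a n : ℕ} {e : Fin a → Fin n}
    {π : Finpartition (Finset.univ : Finset (Fin n))} {B : Finset (Fin a)} :
    B ∈ (restr e π).parts ↔ B.Nonempty ∧ ∃ V ∈ π.parts, preimP e V = B := by
  rw [restr_parts, Finset.mem_erase, Finset.nonempty_iff_ne_empty]
  simp only [Finset.mem_image]

lemma isNonCrossing_restr {a n : ℕ} {e : Fin a → Fin n} (he : StrictMono e)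
    {π : Finpartition (Finset.univ : Finset (Fin n))} (hπ : IsNonCrossing π) :
    IsNonCrossing (restr e π) := by
  rintro ⟨x, y, z, w, h1, h2, h3, B, hB, B', hB', hne, hx, hz, hy, hw⟩
  obtain ⟨-, V, hV, rfl⟩ := mem_restr_parts.1 hB
  obtain ⟨-, V', hV', rfl⟩ := mem_restr_parts.1 hB'
  exact hπ ⟨e x, e y, e z, e w, he h1, he h2, he h3, V, hV, V', hV',
    fun h => hne (by rw [h]), mem_preimP.1 hx, mem_preimP.1 hz,
    mem_preimP.1 hy, mem_preimP.1 hw⟩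

lemma mem_NCs {n : ℕ} {π : Finpartition (Finset.univ : Finset (Fin n))} :
    π ∈ NCs n ↔ IsNonCrossing π := by simp [NCs]

/-- the second-smallest element (as a natural number) of the block of `0`, or `0` if none. -/
def sm {n : ℕ} (hn : 0 < n) (π : Finpartition (Finset.univ : Finset (Fin n))) : ℕ :=
  if h : ((π.part ⟨0, hn⟩).erase ⟨0, hn⟩).Nonempty
  then (((π.part ⟨0, hn⟩).erase ⟨0, hn⟩).min' h).val else 0

lemma erase_nonempty_of_part_ne {n : ℕ} (hn : 0 < n)
    (π : Finpartition (Finset.univ : Finset (Fin n)))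
    (hne : π.part ⟨0, hn⟩ ≠ {(⟨0, hn⟩ : Fin n)}) :
    ((π.part ⟨0, hn⟩).erase ⟨0, hn⟩).Nonempty := by
  rw [Finset.nonempty_iff_ne_empty]
  intro h
  apply hne
  apply Finset.eq_singleton_iff_unique_mem.2 ⟨π.mem_part (Finset.mem_univ _), ?_⟩
  intro x hx
  by_contra hx0
  exact (Finset.notMem_empty x) (h ▸ Finset.mem_erase.2 ⟨hx0, hx⟩)

lemma sm_spec {n : ℕ} (hn : 0 < n)
    (π : Finpartition (Finset.univ : Finset (Fin n)))
    (hne : π.part ⟨0, hn⟩ ≠ {(⟨0, hn⟩ : Fin n)}) :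
    sm hn π = (((π.part ⟨0, hn⟩).erase ⟨0, hn⟩).min'
      (erase_nonempty_of_part_ne hn π hne)).val := by
  rw [sm, dif_pos (erase_nonempty_of_part_ne hn π hne)]

lemma sm_pos {n : ℕ} (hn : 0 < n)
    (π : Finpartition (Finset.univ : Finset (Fin n)))
    (hne : π.part ⟨0, hn⟩ ≠ {(⟨0, hn⟩ : Fin n)}) : 1 ≤ sm hn π := by
  rw [sm_spec hn π hne]
  set w := ((π.part ⟨0, hn⟩).erase ⟨0, hn⟩).min' (erase_nonempty_of_part_ne hn π hne) with hw
  have hmem := Finset.min'_mem ((π.part ⟨0, hn⟩).erase ⟨0, hn⟩) (erase_nonempty_of_part_ne hn π hne)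
  rw [← hw] at hmem
  have hwne := (Finset.mem_erase.1 hmem).1
  rcases Nat.eq_zero_or_pos w.val with h0 | h0
  · exact absurd (Fin.ext h0) hwne
  · exact h0

lemma sm_lt {n : ℕ} (hn : 0 < n)
    (π : Finpartition (Finset.univ : Finset (Fin n)))
    (hne : π.part ⟨0, hn⟩ ≠ {(⟨0, hn⟩ : Fin n)}) : sm hn π < n := by
  rw [sm_spec hn π hne]
  exact (((π.part ⟨0, hn⟩).erase ⟨0, hn⟩).min' _).isLt

lemma jf_mem_part {n : ℕ} (hn : 0 < n)
    (π : Finpartition (Finset.univ : Finset (Fin n)))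
    (hne : π.part ⟨0, hn⟩ ≠ {(⟨0, hn⟩ : Fin n)}) :
    (⟨sm hn π, sm_lt hn π hne⟩ : Fin n) ∈ π.part ⟨0, hn⟩ := by
  have hmem := Finset.min'_mem ((π.part ⟨0, hn⟩).erase ⟨0, hn⟩)
    (erase_nonempty_of_part_ne hn π hne)
  have : (⟨sm hn π, sm_lt hn π hne⟩ : Fin n)
      = ((π.part ⟨0, hn⟩).erase ⟨0, hn⟩).min' (erase_nonempty_of_part_ne hn π hne) :=
    Fin.ext (sm_spec hn π hne)
  rw [this]
  exact Finset.mem_of_mem_erase hmem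

lemma F2 {n : ℕ} (hn : 0 < n)
    (π : Finpartition (Finset.univ : Finset (Fin n)))
    (hne : π.part ⟨0, hn⟩ ≠ {(⟨0, hn⟩ : Fin n)}) {x : Fin n}
    (hx : x ∈ π.part ⟨0, hn⟩) : x = ⟨0, hn⟩ ∨ sm hn π ≤ x.val := by
  by_cases hx0 : x = (⟨0, hn⟩ : Fin n)
  · exact Or.inl hx0
  · right
    rw [sm_spec hn π hne]
    exact Finset.min'_le _ _ (Finset.mem_erase.2 ⟨hx0, hx⟩)

lemma F3 {n : ℕ} (hn : 0 < n)
    {π : Finpartition (Finset.univ : Finset (Fin n))} (hπ : IsNonCrossing π)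
    (hne : π.part ⟨0, hn⟩ ≠ {(⟨0, hn⟩ : Fin n)}) {V : Finset (Fin n)}
    (hV : V ∈ π.parts) (hVne : V ≠ π.part ⟨0, hn⟩) :
    (∀ x ∈ V, 1 ≤ x.val ∧ x.val < sm hn π) ∨ (∀ x ∈ V, sm hn π ≤ x.val) := by
  have hval1 : ∀ y ∈ V, 1 ≤ y.val := by
    intro y hy
    rcases Nat.eq_zero_or_pos y.val with h0 | h0
    · exfalso
      have : y = (⟨0, hn⟩ : Fin n) := Fin.ext h0
      subst this
      exact hVne (π.eq_of_mem_parts hV (π.part_mem.2 (Finset.mem_univ _)) hy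
        (π.mem_part (Finset.mem_univ _)))
    · exact h0
  by_cases hall : ∀ x ∈ V, sm hn π ≤ x.val
  · exact Or.inr hall
  · left
    push_neg at hall
    obtain ⟨x, hxV, hxlt⟩ := hall
    intro y hyV
    refine ⟨hval1 y hyV, ?_⟩
    by_contra hge
    push_neg at hge
    -- y ≠ jf
    have hyne : y ≠ (⟨sm hn π, sm_lt hn π hne⟩ : Fin n) := by
      rintro rfl
      exact hVne (π.eq_of_mem_parts hV (π.part_mem.2 (Finset.mem_univ _)) hyV
        (jf_mem_part hn π hne))
    have hygt : sm hn π < y.val := by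
      rcases Nat.lt_or_ge (sm hn π) y.val with h | h
      · exact h
      · exact absurd (Fin.ext (by omega : y.val = sm hn π)) hyne
    exact hπ ⟨⟨0, hn⟩, x, ⟨sm hn π, sm_lt hn π hne⟩, y,
      Fin.lt_def.2 (by have := hval1 x hxV; exact this),
      Fin.lt_def.2 (by simpa using hxlt),
      Fin.lt_def.2 (by simpa using hygt),
      π.part ⟨0, hn⟩, π.part_mem.2 (Finset.mem_univ _), V, hV,
      fun h => hVne h.symm,
      π.mem_part (Finset.mem_univ _), jf_mem_part hn π hne, hxV, hyV⟩

/- ### Case A : the block of `0` is the singleton `{0}` -/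

section CaseA

variable {n : ℕ}

abbrev eA (hn : 0 < n) : Fin (n - 1) → Fin n := fshift 1 (by omega)

def glueA (hn : 0 < n) (π' : Finpartition (Finset.univ : Finset (Fin (n - 1)))) :
    Finpartition (Finset.univ : Finset (Fin n)) where
  parts := insert {(⟨0, hn⟩ : Fin n)} (π'.parts.image (fun W => W.image (eA hn)))
  supIndep := by
    rw [Finset.supIndep_iff_pairwiseDisjoint]
    intro x hx y hy hxy
    simp only [Finset.coe_insert, Set.mem_insert_iff, Finset.coe_image,
      Set.mem_image, Finset.mem_coe] at hx hy
    simp only [Function.onFun, id_eq]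
    have hzero : ∀ W ∈ π'.parts, Disjoint {(⟨0, hn⟩ : Fin n)} (W.image (eA hn)) := by
      intro W _
      rw [Finset.disjoint_left]
      intro x hx hx'
      rw [Finset.mem_singleton] at hx
      have h1 := (val_of_mem_image_fshift hx').1
      rw [hx] at h1
      have h00 : (⟨0, hn⟩ : Fin n).val = 0 := rfl
      omega
    rcases hx with rfl | ⟨W, hW, rfl⟩ <;> rcases hy with rfl | ⟨W', hW', rfl⟩
    · exact absurd rfl hxy
    · exact hzero W' hW'
    · exact (hzero W hW).symm
    · have hWW' : W ≠ W' := fun h => hxy (by rw [h])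
      exact (Finset.disjoint_image (fshift_injective 1 _)).2 (π'.disjoint hW hW' hWW')
  sup_parts := by
    apply Finset.Subset.antisymm (Finset.subset_univ _)
    intro x _
    rw [Finset.mem_sup]
    rcases Nat.eq_zero_or_pos x.val with h0 | h0
    · exact ⟨{(⟨0, hn⟩ : Fin n)}, Finset.mem_insert_self _ _,
        Finset.mem_singleton.2 (Fin.ext h0)⟩
    · have hxlt := x.isLt
      obtain ⟨W, hW, hiW⟩ := π'.exists_mem
        (Finset.mem_univ (⟨x.val - 1, by omega⟩ : Fin (n - 1)))
      refine ⟨W.image (eA hn), Finset.mem_insert_of_mem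
        (Finset.mem_image_of_mem _ hW), Finset.mem_image.2 ⟨_, hiW, ?_⟩⟩
      apply Fin.ext
      show x.val - 1 + 1 = x.val
      omega
  bot_notMem := by
    rw [Finset.mem_insert]
    rintro (h | h)
    · exact absurd h.symm (Finset.singleton_ne_empty _)
    · obtain ⟨W, hW, hW'⟩ := Finset.mem_image.1 h
      obtain ⟨i, hi⟩ := π'.nonempty_of_mem_parts hW
      have hne : (W.image (eA hn)).Nonempty := ⟨_, Finset.mem_image_of_mem _ hi⟩
      rw [hW'] at hne
      simpa using hne

lemma glueA_parts (hn : 0 < n) (π' : Finpartition (Finset.univ : Finset (Fin (n - 1)))) :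
    (glueA hn π').parts
      = insert {(⟨0, hn⟩ : Fin n)} (π'.parts.image (fun W => W.image (eA hn))) := rfl

lemma eA_strictMono (hn : 0 < n) : StrictMono (eA hn) := fshift_strictMono _ _

lemma eA_injective (hn : 0 < n) : Function.Injective (eA hn) := fshift_injective _ _

lemma preimP_eA_singleton (hn : 0 < n) :
    preimP (eA hn) {(⟨0, hn⟩ : Fin n)} = ∅ := by
  ext i
  simp only [mem_preimP, Finset.mem_singleton, Finset.notMem_empty, iff_false]
  intro h
  have h' : i.val + 1 = 0 := congrArg Fin.val h
  omega

lemma part_zero_glueA (hn : 0 < n) (π' : Finpartition (Finset.univ : Finset (Fin (n - 1)))) :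
    (glueA hn π').part ⟨0, hn⟩ = {(⟨0, hn⟩ : Fin n)} :=
  (glueA hn π').part_eq_of_mem (Finset.mem_insert_self _ _) (Finset.mem_singleton_self _)

lemma isNonCrossing_glueA (hn : 0 < n)
    {π' : Finpartition (Finset.univ : Finset (Fin (n - 1)))}
    (hπ' : IsNonCrossing π') : IsNonCrossing (glueA hn π') := by
  rintro ⟨a, b, c, d, hab, hbc, hcd, B, hB, B', hB', hBB', ha, hc, hb, hd⟩
  rw [glueA_parts] at hB hB'
  rcases Finset.mem_insert.1 hB with rfl | hB
  · have ha' := Finset.mem_singleton.1 ha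
    have hc' := Finset.mem_singleton.1 hc
    rw [ha', ← hc'] at hab
    exact absurd (hab.trans hbc) (lt_irrefl _)
  rcases Finset.mem_insert.1 hB' with rfl | hB'
  · have hb' := Finset.mem_singleton.1 hb
    have hd' := Finset.mem_singleton.1 hd
    rw [hb', ← hd'] at hbc
    exact absurd (hbc.trans hcd) (lt_irrefl _)
  obtain ⟨W, hW, rfl⟩ := Finset.mem_image.1 hB
  obtain ⟨W', hW', rfl⟩ := Finset.mem_image.1 hB'
  obtain ⟨ia, hia, rfl⟩ := Finset.mem_image.1 ha
  obtain ⟨ic, hic, rfl⟩ := Finset.mem_image.1 hc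
  obtain ⟨ib, hib, rfl⟩ := Finset.mem_image.1 hb
  obtain ⟨id', hid, rfl⟩ := Finset.mem_image.1 hd
  have hmono := eA_strictMono hn
  exact hπ' ⟨ia, ib, ic, id', hmono.lt_iff_lt.1 hab, hmono.lt_iff_lt.1 hbc,
    hmono.lt_iff_lt.1 hcd, W, hW, W', hW', fun h => hBB' (by rw [h]),
    hia, hic, hib, hid⟩

lemma glueA_restr (hn : 0 < n) (π : Finpartition (Finset.univ : Finset (Fin n)))
    (hpart : π.part ⟨0, hn⟩ = {(⟨0, hn⟩ : Fin n)}) :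
    glueA hn (restr (eA hn) π) = π := by
  have hzmem : ∀ V ∈ π.parts, (⟨0, hn⟩ : Fin n) ∈ V → V = {(⟨0, hn⟩ : Fin n)} := by
    intro V hV h0
    rw [← π.part_eq_of_mem hV h0, hpart]
  have himg : ∀ V ∈ π.parts, V ≠ {(⟨0, hn⟩ : Fin n)} →
      (preimP (eA hn) V).image (eA hn) = V := by
    intro V hV hVz
    apply image_preimP
    intro x hx
    have hx0 : x.val ≠ 0 := by
      intro h0
      have : x = (⟨0, hn⟩ : Fin n) := Fin.ext h0
      subst this
      exact hVz (hzmem V hV hx)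
    have hxlt := x.isLt
    exact ⟨⟨x.val - 1, by omega⟩, Fin.ext (show x.val - 1 + 1 = x.val by omega)⟩
  apply Finpartition.ext
  rw [glueA_parts, restr_parts]
  ext B
  constructor
  · intro hB
    rcases Finset.mem_insert.1 hB with rfl | hB
    · rw [← hpart]; exact π.part_mem.2 (Finset.mem_univ _)
    · obtain ⟨W, hW, rfl⟩ := Finset.mem_image.1 hB
      rw [Finset.mem_erase] at hW
      obtain ⟨hWne, hW⟩ := hW
      obtain ⟨V, hV, rfl⟩ := Finset.mem_image.1 hW
      have hVz : V ≠ {(⟨0, hn⟩ : Fin n)} := by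
        rintro rfl
        exact hWne (preimP_eA_singleton hn)
      rw [himg V hV hVz]
      exact hV
  · intro hB
    by_cases hBz : B = {(⟨0, hn⟩ : Fin n)}
    · subst hBz; exact Finset.mem_insert_self _ _
    · apply Finset.mem_insert_of_mem
      refine Finset.mem_image.2 ⟨preimP (eA hn) B, ?_, himg B hB hBz⟩
      rw [Finset.mem_erase]
      refine ⟨?_, Finset.mem_image_of_mem _ hB⟩
      intro hemp
      obtain ⟨x, hx⟩ := π.nonempty_of_mem_parts hB
      have hx0 : x.val ≠ 0 := by
        intro h0
        have : x = (⟨0, hn⟩ : Fin n) := Fin.ext h0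
        subst this
        exact hBz (hzmem B hB hx)
      have hxlt := x.isLt
      have : (⟨x.val - 1, by omega⟩ : Fin (n - 1)) ∈ preimP (eA hn) B := by
        rw [mem_preimP]
        have : eA hn ⟨x.val - 1, by omega⟩ = x := Fin.ext (show x.val - 1 + 1 = x.val by omega)
        rw [this]; exact hx
      rw [hemp] at this
      exact absurd this (Finset.notMem_empty _)

lemma restr_glueA (hn : 0 < n) (π' : Finpartition (Finset.univ : Finset (Fin (n - 1)))) :
    restr (eA hn) (glueA hn π') = π' := by
  apply Finpartition.ext
  rw [restr_parts, glueA_parts]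
  ext W
  rw [Finset.mem_erase]
  constructor
  · rintro ⟨hWne, hW⟩
    obtain ⟨V, hV, rfl⟩ := Finset.mem_image.1 hW
    rcases Finset.mem_insert.1 hV with rfl | hV
    · exact absurd (preimP_eA_singleton hn) hWne
    · obtain ⟨W', hW', rfl⟩ := Finset.mem_image.1 hV
      rw [preimP_image (eA_injective hn)]
      exact hW'
  · intro hW
    refine ⟨?_, Finset.mem_image.2 ⟨W.image (eA hn),
      Finset.mem_insert_of_mem (Finset.mem_image_of_mem _ hW),
      preimP_image (eA_injective hn) W⟩⟩
    intro hemp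
    exact π'.bot_notMem (by rw [Finset.bot_eq_empty, ← hemp]; exact hW)

lemma prod_glueA (κ : ℕ → ℂ) (r : ℕ) (hn : 0 < n)
    (π' : Finpartition (Finset.univ : Finset (Fin (n - 1)))) :
    ∏ V ∈ (glueA hn π').parts, blockWt κ r V = κ (r + 1) * ∏ W ∈ π'.parts, κ W.card := by
  rw [glueA_parts]
  have hnotmem : {(⟨0, hn⟩ : Fin n)} ∉ π'.parts.image (fun W => W.image (eA hn)) := by
    intro h
    obtain ⟨W, hW, hW'⟩ := Finset.mem_image.1 h
    obtain ⟨i, hi⟩ := π'.nonempty_of_mem_parts hW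
    have : eA hn i ∈ ({(⟨0, hn⟩ : Fin n)} : Finset (Fin n)) := by
      rw [← hW']; exact Finset.mem_image_of_mem _ hi
    have : i.val + 1 = 0 := congrArg Fin.val (Finset.mem_singleton.1 this)
    omega
  rw [Finset.prod_insert hnotmem]
  have h1 : blockWt κ r {(⟨0, hn⟩ : Fin n)} = κ (r + 1) := by
    rw [blockWt, Finset.card_singleton,
      if_pos ⟨⟨0, hn⟩, Finset.mem_singleton_self _, rfl⟩, Nat.add_comm]
  rw [h1]
  congr 1
  rw [Finset.prod_image (fun W hW W' hW' h =>
    Finset.image_injective (eA_injective hn) h)]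
  apply Finset.prod_congr rfl
  intro W hW
  rw [blockWt, Finset.card_image_of_injective _ (eA_injective hn)]
  rw [if_neg, Nat.add_zero]
  rintro ⟨v, hv, hv0⟩
  have := (val_of_mem_image_fshift hv).1
  omega

lemma sumA (κ : ℕ → ℂ) (r n : ℕ) (hn : 0 < n) :
    ∑ π ∈ (NCs n).filter (fun π => π.part ⟨0, hn⟩ = {(⟨0, hn⟩ : Fin n)}),
        ∏ V ∈ π.parts, blockWt κ r V = κ (r + 1) * Wt κ 0 (n - 1) := by
  rw [Wt_zero, Finset.mul_sum]
  refine Finset.sum_nbij' (fun π => restr (eA hn) π) (fun π' => glueA hn π')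
    ?_ ?_ ?_ ?_ ?_
  · intro π hπ
    rw [mem_NCs]
    exact isNonCrossing_restr (eA_strictMono hn)
      (mem_NCs.1 (Finset.mem_filter.1 hπ).1)
  · intro π' hπ'
    rw [Finset.mem_filter]
    exact ⟨mem_NCs.2 (isNonCrossing_glueA hn (mem_NCs.1 hπ')), part_zero_glueA hn π'⟩
  · intro π hπ
    exact glueA_restr hn π (Finset.mem_filter.1 hπ).2
  · intro π' _
    exact restr_glueA hn π'
  · intro π hπ
    conv_lhs => rw [← glueA_restr hn π (Finset.mem_filter.1 hπ).2]
    exact prod_glueA κ r hn (restr (eA hn) π)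

end CaseA

/- ### Case B : the block of `0` has a second element `j` -/

section CaseB

variable {n j : ℕ}

abbrev eB1 (h2 : j < n) : Fin (j - 1) → Fin n := fshift 1 (by omega)
abbrev eB2 (h2 : j < n) : Fin (n - j) → Fin n := fshift j (by omega)

def zN (h2 : j < n) : Fin n := ⟨0, by omega⟩
def z2 (h2 : j < n) : Fin (n - j) := ⟨0, by omega⟩

lemma eB1_strictMono (h2 : j < n) : StrictMono (eB1 h2) := fshift_strictMono _ _
lemma eB2_strictMono (h2 : j < n) : StrictMono (eB2 h2) := fshift_strictMono _ _
lemma eB1_injective (h2 : j < n) : Function.Injective (eB1 h2) := fshift_injective _ _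
lemma eB2_injective (h2 : j < n) : Function.Injective (eB2 h2) := fshift_injective _ _

/-- transport of a block of the second piece, adding back `0` to the block of `j`. -/
def glue2 (h2 : j < n) (V : Finset (Fin (n - j))) : Finset (Fin n) :=
  if z2 h2 ∈ V then insert (zN h2) (V.image (eB2 h2)) else V.image (eB2 h2)

lemma mem_glue2 {h2 : j < n} {V : Finset (Fin (n - j))} {x : Fin n} :
    x ∈ glue2 h2 V ↔ (x = zN h2 ∧ z2 h2 ∈ V) ∨ x ∈ V.image (eB2 h2) := by
  unfold glue2
  split_ifs with h
  · rw [Finset.mem_insert]; tauto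
  · tauto

lemma val_mem_glue2 {h2 : j < n} {V : Finset (Fin (n - j))} {x : Fin n}
    (hx : x ∈ glue2 h2 V) : x.val = 0 ∨ j ≤ x.val := by
  rcases mem_glue2.1 hx with ⟨rfl, _⟩ | hx
  · left; rfl
  · right; exact (val_of_mem_image_fshift hx).1

lemma zN_not_mem_image (h1 : 1 ≤ j) (h2 : j < n) (V : Finset (Fin (n - j))) :
    zN h2 ∉ V.image (eB2 h2) := by
  intro h
  have := (val_of_mem_image_fshift h).1
  have h0 : (zN h2).val = 0 := rfl
  omega

lemma glue2_nonempty {h2 : j < n} {V : Finset (Fin (n - j))} (hV : V.Nonempty) :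
    (glue2 h2 V).Nonempty := by
  obtain ⟨i, hi⟩ := hV
  exact ⟨eB2 h2 i, mem_glue2.2 (Or.inr (Finset.mem_image_of_mem _ hi))⟩

def glueB (h1 : 1 ≤ j) (h2 : j < n)
    (π₁ : Finpartition (Finset.univ : Finset (Fin (j - 1))))
    (π₂ : Finpartition (Finset.univ : Finset (Fin (n - j)))) :
    Finpartition (Finset.univ : Finset (Fin n)) where
  parts := π₁.parts.image (fun W => W.image (eB1 h2)) ∪ π₂.parts.image (glue2 h2)
  supIndep := by
    rw [Finset.supIndep_iff_pairwiseDisjoint]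
    intro x hx y hy hxy
    simp only [Finset.coe_union, Set.mem_union, Finset.coe_image, Set.mem_image,
      Finset.mem_coe] at hx hy
    simp only [Function.onFun, id_eq]
    rw [Finset.disjoint_left]
    rcases hx with ⟨W, hW, rfl⟩ | ⟨V, hV, rfl⟩ <;>
      rcases hy with ⟨W', hW', rfl⟩ | ⟨V', hV', rfl⟩
    · have hWW' : W ≠ W' := fun h => hxy (by rw [h])
      have hd := π₁.disjoint hW hW' hWW'
      intro x hx hx'
      obtain ⟨i, hi, rfl⟩ := Finset.mem_image.1 hx
      obtain ⟨i', hi', he⟩ := Finset.mem_image.1 hx'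
      simp only [Function.onFun, id_eq] at hd
      rw [Finset.disjoint_left] at hd
      exact hd hi (eB1_injective h2 he ▸ hi')
    · intro x hx hx'
      have hlow := val_of_mem_image_fshift hx
      rcases val_mem_glue2 hx' with h0 | hhi <;> omega
    · intro x hx hx'
      have hlow := val_of_mem_image_fshift hx'
      rcases val_mem_glue2 hx with h0 | hhi <;> omega
    · have hVV' : V ≠ V' := fun h => hxy (by rw [h])
      have hd := π₂.disjoint hV hV' hVV'
      simp only [Function.onFun, id_eq] at hd
      rw [Finset.disjoint_left] at hd
      intro x hx hx'
      rcases mem_glue2.1 hx with ⟨rfl, hzV⟩ | hx2 <;>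
        rcases mem_glue2.1 hx' with ⟨hxe, hzV'⟩ | hx2'
      · exact hd hzV hzV'
      · have := (val_of_mem_image_fshift hx2').1
        have h0 : (zN h2).val = 0 := rfl
        omega
      · have := (val_of_mem_image_fshift hx2).1
        rw [hxe] at this
        have h0 : (zN h2).val = 0 := rfl
        omega
      · obtain ⟨i, hi, rfl⟩ := Finset.mem_image.1 hx2
        obtain ⟨i', hi', he⟩ := Finset.mem_image.1 hx2'
        exact hd hi (eB2_injective h2 he ▸ hi')
  sup_parts := by
    apply Finset.Subset.antisymm (Finset.subset_univ _)
    intro x _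
    rw [Finset.mem_sup]
    have hxlt := x.isLt
    rcases Nat.lt_or_ge x.val j with hlt | hge
    · rcases Nat.eq_zero_or_pos x.val with h0 | h0
      · obtain ⟨V, hV, hzV⟩ := π₂.exists_mem (Finset.mem_univ (z2 h2))
        refine ⟨glue2 h2 V, Finset.mem_union_right _ (Finset.mem_image_of_mem _ hV), ?_⟩
        exact mem_glue2.2 (Or.inl ⟨Fin.ext h0, hzV⟩)
      · obtain ⟨W, hW, hiW⟩ := π₁.exists_mem
          (Finset.mem_univ (⟨x.val - 1, by omega⟩ : Fin (j - 1)))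
        refine ⟨W.image (eB1 h2), Finset.mem_union_left _ (Finset.mem_image_of_mem _ hW),
          Finset.mem_image.2 ⟨_, hiW, Fin.ext (show x.val - 1 + 1 = x.val by omega)⟩⟩
    · obtain ⟨V, hV, hiV⟩ := π₂.exists_mem
        (Finset.mem_univ (⟨x.val - j, by omega⟩ : Fin (n - j)))
      refine ⟨glue2 h2 V, Finset.mem_union_right _ (Finset.mem_image_of_mem _ hV), ?_⟩
      exact mem_glue2.2 (Or.inr (Finset.mem_image.2
        ⟨_, hiV, Fin.ext (show x.val - j + j = x.val by omega)⟩))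
  bot_notMem := by
    rw [Finset.mem_union]
    rintro (h | h)
    · obtain ⟨W, hW, hW'⟩ := Finset.mem_image.1 h
      obtain ⟨i, hi⟩ := π₁.nonempty_of_mem_parts hW
      have hne : (W.image (eB1 h2)).Nonempty := ⟨_, Finset.mem_image_of_mem _ hi⟩
      rw [hW'] at hne
      simp at hne
    · obtain ⟨V, hV, hV'⟩ := Finset.mem_image.1 h
      have hne := glue2_nonempty (h2 := h2) (π₂.nonempty_of_mem_parts hV)
      rw [hV'] at hne
      simp at hne

lemma glueB_parts (h1 : 1 ≤ j) (h2 : j < n)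
    (π₁ : Finpartition (Finset.univ : Finset (Fin (j - 1))))
    (π₂ : Finpartition (Finset.univ : Finset (Fin (n - j)))) :
    (glueB h1 h2 π₁ π₂).parts
      = π₁.parts.image (fun W => W.image (eB1 h2)) ∪ π₂.parts.image (glue2 h2) := rfl

lemma isNonCrossing_glueB (h1 : 1 ≤ j) (h2 : j < n)
    {π₁ : Finpartition (Finset.univ : Finset (Fin (j - 1)))}
    {π₂ : Finpartition (Finset.univ : Finset (Fin (n - j)))}
    (hπ₁ : IsNonCrossing π₁) (hπ₂ : IsNonCrossing π₂) :
    IsNonCrossing (glueB h1 h2 π₁ π₂) := by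
  rintro ⟨a, b, c, d, hab, hbc, hcd, B, hB, B', hB', hBB', ha, hc, hb, hd⟩
  rw [glueB_parts, Finset.mem_union] at hB hB'
  rw [Fin.lt_def] at hab hbc hcd
  rcases hB with hB1 | hB2 <;> rcases hB' with hB1' | hB2'
  · -- both from π₁
    obtain ⟨W, hW, rfl⟩ := Finset.mem_image.1 hB1
    obtain ⟨W', hW', rfl⟩ := Finset.mem_image.1 hB1'
    obtain ⟨ia, hia, rfl⟩ := Finset.mem_image.1 ha
    obtain ⟨ic, hic, rfl⟩ := Finset.mem_image.1 hc
    obtain ⟨ib, hib, rfl⟩ := Finset.mem_image.1 hb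
    obtain ⟨id', hid, rfl⟩ := Finset.mem_image.1 hd
    have hmono := eB1_strictMono h2
    exact hπ₁ ⟨ia, ib, ic, id',
      hmono.lt_iff_lt.1 (Fin.lt_def.2 hab), hmono.lt_iff_lt.1 (Fin.lt_def.2 hbc),
      hmono.lt_iff_lt.1 (Fin.lt_def.2 hcd), W, hW, W', hW',
      fun h => hBB' (by rw [h]), hia, hic, hib, hid⟩
  · -- B from π₁, B' from π₂ : impossible
    obtain ⟨W, hW, rfl⟩ := Finset.mem_image.1 hB1
    obtain ⟨V', hV', rfl⟩ := Finset.mem_image.1 hB2'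
    have hA := val_of_mem_image_fshift ha
    have hC := val_of_mem_image_fshift hc
    rcases val_mem_glue2 hb with h0 | hhi <;> omega
  · -- B from π₂, B' from π₁ : impossible
    obtain ⟨V, hV, rfl⟩ := Finset.mem_image.1 hB2
    obtain ⟨W', hW', rfl⟩ := Finset.mem_image.1 hB1'
    have hBv := val_of_mem_image_fshift hb
    have hDv := val_of_mem_image_fshift hd
    rcases val_mem_glue2 ha with h0 | hhi
    · rcases val_mem_glue2 hc with h0' | hhi' <;> omega
    · omega
  · -- both from π₂
    obtain ⟨V, hV, rfl⟩ := Finset.mem_image.1 hB2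
    obtain ⟨V', hV', rfl⟩ := Finset.mem_image.1 hB2'
    have hVV' : V ≠ V' := fun h => hBB' (by rw [h])
    -- b, d are not zN
    have hbne : b ∈ V'.image (eB2 h2) := by
      rcases mem_glue2.1 hb with ⟨rfl, _⟩ | h
      · have h0 : (zN h2).val = 0 := rfl
        omega
      · exact h
    have hdne : d ∈ V'.image (eB2 h2) := by
      rcases mem_glue2.1 hd with ⟨rfl, _⟩ | h
      · have h0 : (zN h2).val = 0 := rfl
        have := (val_of_mem_image_fshift hbne).1
        omega
      · exact h
    have hcne : c ∈ V.image (eB2 h2) := by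
      rcases mem_glue2.1 hc with ⟨rfl, _⟩ | h
      · have h0 : (zN h2).val = 0 := rfl
        have := (val_of_mem_image_fshift hbne).1
        omega
      · exact h
    obtain ⟨ib, hib, rfl⟩ := Finset.mem_image.1 hbne
    obtain ⟨id', hid, rfl⟩ := Finset.mem_image.1 hdne
    obtain ⟨ic, hic, rfl⟩ := Finset.mem_image.1 hcne
    have hmono := eB2_strictMono h2
    rcases mem_glue2.1 ha with ⟨rfl, hzV⟩ | haimg
    · -- a = zN, use z2 instead
      have hz2b : z2 h2 < ib := by
        rw [Fin.lt_def]
        rcases Nat.eq_zero_or_pos ib.val with h0 | h0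
        · exfalso
          have : ib = z2 h2 := Fin.ext h0
          subst this
          have hd2 := π₂.disjoint hV hV' hVV'
          simp only [Function.onFun, id_eq] at hd2
          rw [Finset.disjoint_left] at hd2
          exact hd2 hzV hib
        · exact h0
      exact hπ₂ ⟨z2 h2, ib, ic, id', hz2b,
        (by rw [Fin.lt_def]; have h' : ib.val + j < ic.val + j := hbc; omega),
        (by rw [Fin.lt_def]; have h' : ic.val + j < id'.val + j := hcd; omega),
        V, hV, V', hV', hVV', hzV, hic, hib, hid⟩
    · obtain ⟨ia, hia, rfl⟩ := Finset.mem_image.1 haimg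
      exact hπ₂ ⟨ia, ib, ic, id',
        (by rw [Fin.lt_def]; have h' : ia.val + j < ib.val + j := hab; omega),
        (by rw [Fin.lt_def]; have h' : ib.val + j < ic.val + j := hbc; omega),
        (by rw [Fin.lt_def]; have h' : ic.val + j < id'.val + j := hcd; omega),
        V, hV, V', hV', hVV', hia, hic, hib, hid⟩

lemma eB2_z2 (h1 : 1 ≤ j) (h2 : j < n) : eB2 h2 (z2 h2) = ⟨j, h2⟩ :=
  Fin.ext (Nat.zero_add j)

lemma part_zero_glueB (h1 : 1 ≤ j) (h2 : j < n)
    (π₁ : Finpartition (Finset.univ : Finset (Fin (j - 1))))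
    (π₂ : Finpartition (Finset.univ : Finset (Fin (n - j)))) :
    (glueB h1 h2 π₁ π₂).part (zN h2) = glue2 h2 (π₂.part (z2 h2)) := by
  apply Finpartition.part_eq_of_mem
  · rw [glueB_parts]
    exact Finset.mem_union_right _
      (Finset.mem_image_of_mem _ (π₂.part_mem.2 (Finset.mem_univ _)))
  · exact mem_glue2.2 (Or.inl ⟨rfl, π₂.mem_part (Finset.mem_univ _)⟩)

lemma part_zero_glueB_ne (h1 : 1 ≤ j) (h2 : j < n)
    (π₁ : Finpartition (Finset.univ : Finset (Fin (j - 1))))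
    (π₂ : Finpartition (Finset.univ : Finset (Fin (n - j)))) :
    (glueB h1 h2 π₁ π₂).part (zN h2) ≠ {zN h2} := by
  rw [part_zero_glueB h1 h2 π₁ π₂]
  intro h
  have hmem : eB2 h2 (z2 h2) ∈ glue2 h2 (π₂.part (z2 h2)) :=
    mem_glue2.2 (Or.inr (Finset.mem_image_of_mem _ (π₂.mem_part (Finset.mem_univ _))))
  rw [h, Finset.mem_singleton, eB2_z2 h1 h2] at hmem
  have hv : j = (zN h2).val := congrArg Fin.val hmem
  have h0 : (zN h2).val = 0 := rfl
  omega

lemma sm_glueB (hn : 0 < n) (h1 : 1 ≤ j) (h2 : j < n)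
    (π₁ : Finpartition (Finset.univ : Finset (Fin (j - 1))))
    (π₂ : Finpartition (Finset.univ : Finset (Fin (n - j)))) :
    sm hn (glueB h1 h2 π₁ π₂) = j := by
  have hzz : (⟨0, hn⟩ : Fin n) = zN h2 := rfl
  have hpz : (glueB h1 h2 π₁ π₂).part ⟨0, hn⟩ = glue2 h2 (π₂.part (z2 h2)) :=
    part_zero_glueB h1 h2 π₁ π₂
  have hglue : glue2 h2 (π₂.part (z2 h2))
      = insert (zN h2) ((π₂.part (z2 h2)).image (eB2 h2)) := by
    rw [glue2, if_pos (π₂.mem_part (Finset.mem_univ _))]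
  have herase : ((glueB h1 h2 π₁ π₂).part ⟨0, hn⟩).erase ⟨0, hn⟩
      = (π₂.part (z2 h2)).image (eB2 h2) := by
    rw [hpz, hglue, hzz]
    exact Finset.erase_insert (zN_not_mem_image h1 h2 _)
  have hne2 : ((π₂.part (z2 h2)).image (eB2 h2)).Nonempty :=
    ⟨_, Finset.mem_image_of_mem _ (π₂.mem_part (Finset.mem_univ _))⟩
  have hEne : (((glueB h1 h2 π₁ π₂).part ⟨0, hn⟩).erase ⟨0, hn⟩).Nonempty := by
    rw [herase]; exact hne2
  rw [sm]
  rw [dif_pos hEne]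
  apply le_antisymm
  · have hmle := Finset.min'_le (((glueB h1 h2 π₁ π₂).part ⟨0, hn⟩).erase ⟨0, hn⟩)
      (eB2 h2 (z2 h2)) (by
        rw [herase]
        exact Finset.mem_image_of_mem _ (π₂.mem_part (Finset.mem_univ _)))
    have hv : (eB2 h2 (z2 h2)).val = j := congrArg Fin.val (eB2_z2 h1 h2)
    exact le_trans (Fin.le_def.1 hmle) (le_of_eq hv)
  · have hmin : (⟨j, h2⟩ : Fin n)
        ≤ Finset.min' (((glueB h1 h2 π₁ π₂).part ⟨0, hn⟩).erase ⟨0, hn⟩) hEne := by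
      apply Finset.le_min'
      intro y hy
      rw [herase] at hy
      exact Fin.le_def.2 ((val_of_mem_image_fshift hy).1)
    exact Fin.le_def.1 hmin

lemma preimP_eB1_glue2 (h1 : 1 ≤ j) (h2 : j < n) (V : Finset (Fin (n - j))) :
    preimP (eB1 h2) (glue2 h2 V) = ∅ := by
  ext i
  simp only [mem_preimP, Finset.notMem_empty, iff_false]
  intro h
  have hlt := i.isLt
  have hv : (eB1 h2 i).val = i.val + 1 := rfl
  rcases val_mem_glue2 h with h0 | hge <;> omega

lemma preimP_eB2_image_eB1 (h1 : 1 ≤ j) (h2 : j < n) (W : Finset (Fin (j - 1))) :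
    preimP (eB2 h2) (W.image (eB1 h2)) = ∅ := by
  ext i
  simp only [mem_preimP, Finset.notMem_empty, iff_false]
  intro h
  have hb := val_of_mem_image_fshift h
  have hv : (eB2 h2 i).val = i.val + j := rfl
  omega

lemma preimP_eB2_glue2 (h1 : 1 ≤ j) (h2 : j < n) (V : Finset (Fin (n - j))) :
    preimP (eB2 h2) (glue2 h2 V) = V := by
  ext i
  rw [mem_preimP]
  constructor
  · intro h
    rcases mem_glue2.1 h with ⟨he, _⟩ | himg
    · exfalso
      have hv : i.val + j = (zN h2).val := congrArg Fin.val he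
      have h0 : (zN h2).val = 0 := rfl
      omega
    · obtain ⟨i', hi', he⟩ := Finset.mem_image.1 himg
      exact eB2_injective h2 he ▸ hi'
  · intro h
    exact mem_glue2.2 (Or.inr (Finset.mem_image_of_mem _ h))

lemma restr_glueB₁ (h1 : 1 ≤ j) (h2 : j < n)
    (π₁ : Finpartition (Finset.univ : Finset (Fin (j - 1))))
    (π₂ : Finpartition (Finset.univ : Finset (Fin (n - j)))) :
    restr (eB1 h2) (glueB h1 h2 π₁ π₂) = π₁ := by
  apply Finpartition.ext
  rw [restr_parts, glueB_parts]
  ext W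
  rw [Finset.mem_erase]
  constructor
  · rintro ⟨hWne, hW⟩
    obtain ⟨V, hV, rfl⟩ := Finset.mem_image.1 hW
    rcases Finset.mem_union.1 hV with hV1 | hV2
    · obtain ⟨W', hW', rfl⟩ := Finset.mem_image.1 hV1
      rw [preimP_image (eB1_injective h2)]
      exact hW'
    · obtain ⟨V', hV', rfl⟩ := Finset.mem_image.1 hV2
      exact absurd (preimP_eB1_glue2 h1 h2 V') hWne
  · intro hW
    refine ⟨?_, Finset.mem_image.2 ⟨W.image (eB1 h2),
      Finset.mem_union_left _ (Finset.mem_image_of_mem _ hW),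
      preimP_image (eB1_injective h2) W⟩⟩
    intro hemp
    exact π₁.bot_notMem (by rw [Finset.bot_eq_empty, ← hemp]; exact hW)

lemma restr_glueB₂ (h1 : 1 ≤ j) (h2 : j < n)
    (π₁ : Finpartition (Finset.univ : Finset (Fin (j - 1))))
    (π₂ : Finpartition (Finset.univ : Finset (Fin (n - j)))) :
    restr (eB2 h2) (glueB h1 h2 π₁ π₂) = π₂ := by
  apply Finpartition.ext
  rw [restr_parts, glueB_parts]
  ext V
  rw [Finset.mem_erase]
  constructor
  · rintro ⟨hVne, hV⟩
    obtain ⟨U, hU, rfl⟩ := Finset.mem_image.1 hV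
    rcases Finset.mem_union.1 hU with hU1 | hU2
    · obtain ⟨W', hW', rfl⟩ := Finset.mem_image.1 hU1
      exact absurd (preimP_eB2_image_eB1 h1 h2 W') hVne
    · obtain ⟨V', hV', rfl⟩ := Finset.mem_image.1 hU2
      rw [preimP_eB2_glue2 h1 h2]
      exact hV'
  · intro hV
    refine ⟨?_, Finset.mem_image.2 ⟨glue2 h2 V,
      Finset.mem_union_right _ (Finset.mem_image_of_mem _ hV),
      preimP_eB2_glue2 h1 h2 V⟩⟩
    intro hemp
    exact π₂.bot_notMem (by rw [Finset.bot_eq_empty, ← hemp]; exact hV)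

lemma prod_glueB (κ : ℕ → ℂ) (r : ℕ) (h1 : 1 ≤ j) (h2 : j < n)
    (π₁ : Finpartition (Finset.univ : Finset (Fin (j - 1))))
    (π₂ : Finpartition (Finset.univ : Finset (Fin (n - j)))) :
    ∏ V ∈ (glueB h1 h2 π₁ π₂).parts, blockWt κ r V
      = (∏ W ∈ π₁.parts, κ W.card) * ∏ W ∈ π₂.parts, blockWt κ (r + 1) W := by
  rw [glueB_parts]
  have hdisj : Disjoint (π₁.parts.image (fun W => W.image (eB1 h2)))
      (π₂.parts.image (glue2 h2)) := by
    rw [Finset.disjoint_left]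
    intro B hB1 hB2
    obtain ⟨W, hW, rfl⟩ := Finset.mem_image.1 hB1
    obtain ⟨V, hV, hglue⟩ := Finset.mem_image.1 hB2
    obtain ⟨i, hi⟩ := π₂.nonempty_of_mem_parts hV
    have hmem : eB2 h2 i ∈ W.image (eB1 h2) := by
      rw [← hglue]
      exact mem_glue2.2 (Or.inr (Finset.mem_image_of_mem _ hi))
    have hb := val_of_mem_image_fshift hmem
    have hv : (eB2 h2 i).val = i.val + j := rfl
    omega
  rw [Finset.prod_union hdisj]
  congr 1
  · rw [Finset.prod_image (fun W hW W' hW' h => Finset.image_injective (eB1_injective h2) h)]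
    apply Finset.prod_congr rfl
    intro W hW
    rw [blockWt, Finset.card_image_of_injective _ (eB1_injective h2), if_neg, Nat.add_zero]
    rintro ⟨v, hv, hv0⟩
    have := (val_of_mem_image_fshift hv).1
    omega
  · rw [Finset.prod_image (fun V hV V' hV' h => by
      have hpre := preimP_eB2_glue2 h1 h2 V
      rw [h, preimP_eB2_glue2 h1 h2 V'] at hpre
      exact hpre.symm)]
    apply Finset.prod_congr rfl
    intro V hV
    by_cases hz : z2 h2 ∈ V
    · rw [glue2, if_pos hz, blockWt, blockWt]
      rw [Finset.card_insert_of_notMem (zN_not_mem_image h1 h2 V),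
        Finset.card_image_of_injective _ (eB2_injective h2)]
      rw [if_pos ⟨zN h2, Finset.mem_insert_self _ _, rfl⟩, if_pos ⟨z2 h2, hz, rfl⟩]
      congr 1
      omega
    · have hc1 : ¬ ∃ v ∈ V.image (eB2 h2), (v : ℕ) = 0 := by
        rintro ⟨v, hv, hv0⟩
        have := (val_of_mem_image_fshift hv).1
        omega
      have hc2 : ¬ ∃ v ∈ V, (v : ℕ) = 0 := by
        rintro ⟨v, hv, hv0⟩
        have hvz : v = z2 h2 := Fin.ext hv0
        exact hz (hvz ▸ hv)
      rw [glue2, if_neg hz, blockWt, blockWt,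
        Finset.card_image_of_injective _ (eB2_injective h2), if_neg hc1, if_neg hc2]

lemma glueB_restr {n j : ℕ} (hn : 0 < n) (h1 : 1 ≤ j) (h2 : j < n)
    {π : Finpartition (Finset.univ : Finset (Fin n))} (hπ : IsNonCrossing π)
    (hne : π.part ⟨0, hn⟩ ≠ {(⟨0, hn⟩ : Fin n)}) (hsm : sm hn π = j) :
    glueB h1 h2 (restr (eB1 h2) π) (restr (eB2 h2) π) = π := by
  have hzz : (⟨0, hn⟩ : Fin n) = zN h2 := rfl
  have hjf : (⟨j, h2⟩ : Fin n) ∈ π.part ⟨0, hn⟩ := by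
    have := jf_mem_part hn π hne
    have he : (⟨sm hn π, sm_lt hn π hne⟩ : Fin n) = (⟨j, h2⟩ : Fin n) := Fin.ext hsm
    rwa [he] at this
  have heB2z2 : eB2 h2 (z2 h2) = (⟨j, h2⟩ : Fin n) := eB2_z2 h1 h2
  -- key computation for the zero block
  have key0 : glue2 h2 (preimP (eB2 h2) (π.part ⟨0, hn⟩)) = π.part ⟨0, hn⟩ := by
    have hz2m : z2 h2 ∈ preimP (eB2 h2) (π.part ⟨0, hn⟩) := by
      rw [mem_preimP, heB2z2]
      exact hjf
    rw [glue2, if_pos hz2m]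
    have himg : (preimP (eB2 h2) (π.part ⟨0, hn⟩)).image (eB2 h2)
        = (π.part ⟨0, hn⟩).erase ⟨0, hn⟩ := by
      ext x
      simp only [Finset.mem_image, mem_preimP, Finset.mem_erase]
      constructor
      · rintro ⟨i, hiV, rfl⟩
        refine ⟨?_, hiV⟩
        intro h0
        have hv : i.val + j = (⟨0, hn⟩ : Fin n).val := congrArg Fin.val h0
        have h00 : (⟨0, hn⟩ : Fin n).val = 0 := rfl
        omega
      · rintro ⟨hx0, hxV⟩
        have hxge : j ≤ x.val := by
          rcases F2 hn π hne hxV with h0 | hge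
          · exact absurd h0 hx0
          · omega
        have hxlt := x.isLt
        exact ⟨⟨x.val - j, by omega⟩, by
          constructor
          · have he : eB2 h2 ⟨x.val - j, by omega⟩ = x :=
              Fin.ext (show x.val - j + j = x.val by omega)
            rw [he]; exact hxV
          · exact Fin.ext (show x.val - j + j = x.val by omega)⟩
    rw [himg]
    exact Finset.insert_erase (π.mem_part (Finset.mem_univ (⟨0, hn⟩ : Fin n)))
  -- reconstruction for low blocks
  have keyL : ∀ V ∈ π.parts, (∀ x ∈ V, 1 ≤ x.val ∧ x.val < j) →
      (preimP (eB1 h2) V).image (eB1 h2) = V := by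
    intro V hV hlow
    apply image_preimP
    intro x hx
    have h3 := hlow x hx
    exact ⟨⟨x.val - 1, by omega⟩, Fin.ext (show x.val - 1 + 1 = x.val by omega)⟩
  -- reconstruction for high blocks
  have keyR : ∀ V ∈ π.parts, V ≠ π.part ⟨0, hn⟩ → (∀ x ∈ V, j ≤ x.val) →
      glue2 h2 (preimP (eB2 h2) V) = V := by
    intro V hV hVne hhigh
    have hz2 : z2 h2 ∉ preimP (eB2 h2) V := by
      rw [mem_preimP, heB2z2]
      intro h
      exact hVne (π.eq_of_mem_parts hV (π.part_mem.2 (Finset.mem_univ _)) h hjf)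
    rw [glue2, if_neg hz2]
    apply image_preimP
    intro x hx
    have h3 := hhigh x hx
    have hxlt := x.isLt
    exact ⟨⟨x.val - j, by omega⟩, Fin.ext (show x.val - j + j = x.val by omega)⟩
  -- dichotomy
  have hF3 : ∀ V ∈ π.parts, V ≠ π.part ⟨0, hn⟩ →
      (∀ x ∈ V, 1 ≤ x.val ∧ x.val < j) ∨ (∀ x ∈ V, j ≤ x.val) := by
    intro V hV hVne
    rcases F3 hn hπ hne hV hVne with h | h
    · exact Or.inl (by intro x hx; have := h x hx; omega)
    · exact Or.inr (by intro x hx; have := h x hx; omega)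
  apply Finpartition.ext
  rw [glueB_parts]
  ext B
  constructor
  · intro hB
    rcases Finset.mem_union.1 hB with hB1 | hB2
    · obtain ⟨W, hW, rfl⟩ := Finset.mem_image.1 hB1
      obtain ⟨hWne, V, hV, rfl⟩ := mem_restr_parts.1 hW
      obtain ⟨i, hi⟩ := hWne
      have hiV : eB1 h2 i ∈ V := mem_preimP.1 hi
      have hilt := i.isLt
      have hiv : (eB1 h2 i).val = i.val + 1 := rfl
      have hVz : V ≠ π.part ⟨0, hn⟩ := by
        rintro rfl
        rcases F2 hn π hne hiV with h0 | hge
        · have := congrArg Fin.val h0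
          have h00 : (⟨0, hn⟩ : Fin n).val = 0 := rfl
          omega
        · omega
      rcases hF3 V hV hVz with hlow | hhigh
      · rw [keyL V hV hlow]; exact hV
      · exfalso
        have := hhigh _ hiV
        omega
    · obtain ⟨W, hW, rfl⟩ := Finset.mem_image.1 hB2
      obtain ⟨hWne, V, hV, rfl⟩ := mem_restr_parts.1 hW
      by_cases hVz : V = π.part ⟨0, hn⟩
      · rw [hVz, key0]
        exact π.part_mem.2 (Finset.mem_univ _)
      · obtain ⟨i, hi⟩ := hWne
        have hiV : eB2 h2 i ∈ V := mem_preimP.1 hi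
        have hiv : (eB2 h2 i).val = i.val + j := rfl
        rcases hF3 V hV hVz with hlow | hhigh
        · exfalso
          have := hlow _ hiV
          omega
        · rw [keyR V hV hVz hhigh]; exact hV
  · intro hB
    rw [Finset.mem_union]
    by_cases hVz : B = π.part ⟨0, hn⟩
    · right
      apply Finset.mem_image.2
      refine ⟨preimP (eB2 h2) B, mem_restr_parts.2 ⟨?_, B, hB, rfl⟩, by rw [hVz, key0, ← hVz]⟩
      rw [hVz]
      exact ⟨z2 h2, by rw [mem_preimP, heB2z2]; exact hjf⟩
    · rcases hF3 B hB hVz with hlow | hhigh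
      · left
        apply Finset.mem_image.2
        refine ⟨preimP (eB1 h2) B, mem_restr_parts.2 ⟨?_, B, hB, rfl⟩, keyL B hB hlow⟩
        obtain ⟨x, hx⟩ := π.nonempty_of_mem_parts hB
        have h3 := hlow x hx
        refine ⟨⟨x.val - 1, by omega⟩, mem_preimP.2 ?_⟩
        have he : eB1 h2 ⟨x.val - 1, by omega⟩ = x :=
          Fin.ext (show x.val - 1 + 1 = x.val by omega)
        rw [he]; exact hx
      · right
        apply Finset.mem_image.2
        refine ⟨preimP (eB2 h2) B, mem_restr_parts.2 ⟨?_, B, hB, rfl⟩, keyR B hB hVz hhigh⟩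
        obtain ⟨x, hx⟩ := π.nonempty_of_mem_parts hB
        have h3 := hhigh x hx
        have hxlt := x.isLt
        refine ⟨⟨x.val - j, by omega⟩, mem_preimP.2 ?_⟩
        have he : eB2 h2 ⟨x.val - j, by omega⟩ = x :=
          Fin.ext (show x.val - j + j = x.val by omega)
        rw [he]; exact hx

lemma sumB (κ : ℕ → ℂ) (r : ℕ) {n j : ℕ} (hn : 0 < n) (h1 : 1 ≤ j) (h2 : j < n) :
    ∑ π ∈ (NCs n).filter (fun π =>
        ¬ π.part ⟨0, hn⟩ = {(⟨0, hn⟩ : Fin n)} ∧ sm hn π = j),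
        ∏ V ∈ π.parts, blockWt κ r V
      = Wt κ 0 (j - 1) * Wt κ (r + 1) (n - j) := by
  rw [Wt_zero, Wt, Finset.sum_mul_sum]
  rw [← Finset.sum_product']
  refine Finset.sum_nbij' (fun π => (restr (eB1 h2) π, restr (eB2 h2) π))
    (fun p => glueB h1 h2 p.1 p.2) ?_ ?_ ?_ ?_ ?_
  · intro π hπ
    rw [Finset.mem_filter] at hπ
    rw [Finset.mem_product]
    exact ⟨mem_NCs.2 (isNonCrossing_restr (eB1_strictMono h2) (mem_NCs.1 hπ.1)),
      mem_NCs.2 (isNonCrossing_restr (eB2_strictMono h2) (mem_NCs.1 hπ.1))⟩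
  · intro p hp
    rw [Finset.mem_product] at hp
    rw [Finset.mem_filter]
    refine ⟨mem_NCs.2 (isNonCrossing_glueB h1 h2 (mem_NCs.1 hp.1) (mem_NCs.1 hp.2)),
      ?_, ?_⟩
    · exact part_zero_glueB_ne h1 h2 p.1 p.2
    · exact sm_glueB hn h1 h2 p.1 p.2
  · intro π hπ
    rw [Finset.mem_filter] at hπ
    exact glueB_restr hn h1 h2 (mem_NCs.1 hπ.1) hπ.2.1 hπ.2.2
  · intro p hp
    exact Prod.ext (restr_glueB₁ h1 h2 p.1 p.2) (restr_glueB₂ h1 h2 p.1 p.2)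
  · intro π hπ
    rw [Finset.mem_filter] at hπ
    conv_lhs => rw [← glueB_restr hn h1 h2 (mem_NCs.1 hπ.1) hπ.2.1 hπ.2.2]
    exact prod_glueB κ r h1 h2 _ _

end CaseB

set_option maxHeartbeats 2000000 in
/-- THE combinatorial recursion (first-block decomposition). -/
lemma Wt_rec (κ : ℕ → ℂ) (r n : ℕ) (hn : 1 ≤ n) :
    Wt κ r n = κ (r + 1) * Wt κ 0 (n - 1)
      + ∑ j ∈ Finset.Icc 1 (n - 1), Wt κ 0 (j - 1) * Wt κ (r + 1) (n - j) := by
  have hn0 : 0 < n := hn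
  have hsplit := Finset.sum_filter_add_sum_filter_not (NCs n)
    (fun π => π.part ⟨0, hn0⟩ = {(⟨0, hn0⟩ : Fin n)})
    (fun π => ∏ V ∈ π.parts, blockWt κ r V)
  rw [Wt, ← hsplit]
  congr 1
  · exact sumA κ r n hn0
  · have hmaps : ∀ π ∈ (NCs n).filter
        (fun π => ¬ π.part ⟨0, hn0⟩ = {(⟨0, hn0⟩ : Fin n)}),
        sm hn0 π ∈ Finset.Icc 1 (n - 1) := by
      intro π hπ
      rw [Finset.mem_filter] at hπ
      rw [Finset.mem_Icc]
      have hlt := sm_lt hn0 π hπ.2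
      exact ⟨sm_pos hn0 π hπ.2, by omega⟩
    rw [← Finset.sum_fiberwise_of_maps_to hmaps]
    apply Finset.sum_congr rfl
    intro j hj
    rw [Finset.mem_Icc] at hj
    rw [Finset.filter_filter]
    exact sumB κ r hn0 hj.1 (by omega)

/- ### Power series part -/

lemma coeff_pow_eq_zero {g : PowerSeries ℂ} (hg : constantCoeff g = 0)
    {k t : ℕ} (ht : t < k) : coeff t (g ^ k) = 0 := by
  have hX : (X : PowerSeries ℂ) ∣ g := by
    have := (X_pow_dvd_iff (n := 1) (φ := g)).2
    simpa [pow_one] using this (by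
      intro m hm
      interval_cases m
      simpa [coeff_zero_eq_constantCoeff] using hg)
  have hXk : (X : PowerSeries ℂ) ^ k ∣ g ^ k := pow_dvd_pow_of_dvd hX k
  exact (X_pow_dvd_iff.1 hXk) t ht

lemma key_induction (κ : ℕ → ℂ) (g : PowerSeries ℂ)
    (hg : ∀ i, coeff i g = if i = 0 then 0 else Wt κ 0 (i - 1)) :
    ∀ n, 1 ≤ n → ∀ r, Wt κ r n = ∑ k ∈ Finset.Icc 1 n, κ (k + r) * coeff n (g ^ k) := by
  have hg0 : constantCoeff g = 0 := by
    rw [← coeff_zero_eq_constantCoeff_apply, hg]; simp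
  intro n
  induction n using Nat.strong_induction_on with
  | _ n IH =>
    intro hn r
    rw [Wt_rec κ r n hn]
    have hcoeffg : ∀ i, 1 ≤ i → coeff i g = Wt κ 0 (i - 1) := by
      intro i hi; rw [hg, if_neg (by omega)]
    -- second summand
    have hB : ∑ j ∈ Finset.Icc 1 (n - 1), Wt κ 0 (j - 1) * Wt κ (r + 1) (n - j)
        = ∑ k ∈ Finset.Icc 2 n, κ (k + r) * coeff n (g ^ k) := by
      have step1 : ∀ j ∈ Finset.Icc 1 (n - 1),
          Wt κ 0 (j - 1) * Wt κ (r + 1) (n - j)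
            = ∑ k ∈ Finset.Icc 1 (n - 1),
                κ (k + (r + 1)) * (coeff j g * coeff (n - j) (g ^ k)) := by
        intro j hj
        simp only [Finset.mem_Icc] at hj
        rw [IH (n - j) (by omega) (by omega) (r + 1), ← hcoeffg j hj.1]
        rw [Finset.mul_sum]
        rw [← Finset.sum_subset (Finset.Icc_subset_Icc_right (by omega : n - j ≤ n - 1))]
        · exact Finset.sum_congr rfl (fun k hk => by ring)
        · intro k hk hk'
          simp only [Finset.mem_Icc] at hk hk'
          have : coeff (n - j) (g ^ k) = 0 := coeff_pow_eq_zero hg0 (by omega)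
          rw [this]; ring
      rw [Finset.sum_congr rfl step1, Finset.sum_comm]
      have step2 : ∀ k ∈ Finset.Icc 1 (n - 1),
          ∑ j ∈ Finset.Icc 1 (n - 1), κ (k + (r + 1)) * (coeff j g * coeff (n - j) (g ^ k))
            = κ (k + 1 + r) * coeff n (g ^ (k + 1)) := by
        intro k hk
        simp only [Finset.mem_Icc] at hk
        rw [← Finset.mul_sum]
        have hmul : coeff n (g ^ (k + 1)) =
            ∑ j ∈ Finset.Icc 1 (n - 1), coeff j g * coeff (n - j) (g ^ k) := by
          rw [pow_succ', coeff_mul, Finset.Nat.sum_antidiagonal_eq_sum_range_succ_mk]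
          have hsub : Finset.Icc 1 (n - 1) ⊆ Finset.range (n + 1) := by
            intro x hx
            simp only [Finset.mem_Icc] at hx
            simp only [Finset.mem_range]
            omega
          rw [← Finset.sum_subset hsub]
          intro j hj hj'
          simp only [Finset.mem_range] at hj
          simp only [Finset.mem_Icc] at hj'
          rcases (by omega : j = 0 ∨ j = n) with h | h
          · rw [h, coeff_zero_eq_constantCoeff_apply, hg0, zero_mul]
          · rw [h, coeff_pow_eq_zero hg0 (by omega : n - n < k), mul_zero]
        rw [hmul]
        ring_nf
      rw [Finset.sum_congr rfl step2]
      have himg : Finset.Icc 2 n = (Finset.Icc 1 (n - 1)).image (· + 1) := by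
        rw [Finset.image_add_right_Icc]
        congr 1
        omega
      rw [himg, Finset.sum_image (by intro x _ y _ h; simp only at h; omega)]
    rw [hB]
    have hsplit : Finset.Icc 1 n = insert 1 (Finset.Icc 2 n) := by
      ext x
      simp only [Finset.mem_Icc, Finset.mem_insert]
      omega
    rw [hsplit, Finset.sum_insert (by simp)]
    rw [pow_one, hcoeffg n hn]
    ring_nf

lemma m_eq_Wt (m κ : ℕ → ℂ) (hm0 : m 0 = 1)
    (hm : ∀ n : ℕ, 1 ≤ n → m n =
      ∑ π ∈ Finset.univ.filter
          (fun π : Finpartition (Finset.univ : Finset (Fin n)) => IsNonCrossing π),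
        ∏ V ∈ π.parts, κ V.card) :
    ∀ t, m t = Wt κ 0 t := by
  intro t
  rcases Nat.eq_zero_or_pos t with h | h
  · subst h; rw [hm0, Wt_nil]
  · rw [hm t h, Wt_zero]; rfl

lemma powerSeries_identity (m κ : ℕ → ℂ) (hm0 : m 0 = 1)
    (hm : ∀ n : ℕ, 1 ≤ n → m n =
      ∑ π ∈ Finset.univ.filter
          (fun π : Finpartition (Finset.univ : Finset (Fin n)) => IsNonCrossing π),
        ∏ V ∈ π.parts, κ V.card) :
    (PowerSeries.mk m : PowerSeries ℂ)
      = 1 + (X * PowerSeries.mk m) * RSeries κ (X * PowerSeries.mk m) := by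
  set g : PowerSeries ℂ := X * PowerSeries.mk m with hgdef
  have hmW := m_eq_Wt m κ hm0 hm
  have hgc : ∀ i, coeff i g = if i = 0 then 0 else Wt κ 0 (i - 1) := by
    intro i
    rw [hgdef, ← pow_one (X : PowerSeries ℂ), coeff_X_pow_mul', coeff_mk]
    rcases Nat.eq_zero_or_pos i with h | h
    · subst h; simp
    · rw [if_pos (by omega), if_neg (by omega), hmW]
  ext n
  rcases Nat.eq_zero_or_pos n with h | h
  · subst h
    have hg0 : constantCoeff g = 0 := by
      rw [← coeff_zero_eq_constantCoeff_apply, hgc]; simp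
    rw [coeff_mk, hm0, map_add, coeff_one, if_pos rfl]
    have hz : coeff 0 (g * RSeries κ g) = 0 := by
      rw [coeff_zero_eq_constantCoeff_apply, map_mul, hg0, zero_mul]
    rw [hz, add_zero]
  · have hg0 : constantCoeff g = 0 := by
      rw [← coeff_zero_eq_constantCoeff_apply, hgc]; simp
    rw [map_add, coeff_one, if_neg (by omega)]
    rw [coeff_mk, hmW n]
    -- compute coeff n (g * RSeries κ g)
    have hR : ∀ j, coeff j (RSeries κ g) =
        ∑ k ∈ Finset.Icc 1 (j + 1), κ k * coeff j (g ^ (k - 1)) := by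
      intro j; rw [RSeries, coeff_mk]
    have hcalc : coeff n (g * RSeries κ g)
        = ∑ k ∈ Finset.Icc 1 n, κ k * coeff n (g ^ k) := by
      rw [coeff_mul]
      have step1 : ∀ p ∈ Finset.HasAntidiagonal.antidiagonal n,
          coeff p.1 g * coeff p.2 (RSeries κ g)
          = ∑ k ∈ Finset.Icc 1 (n + 1), coeff p.1 g * (κ k * coeff p.2 (g ^ (k - 1))) := by
        intro p hp
        rw [hR, Finset.mul_sum]
        apply Finset.sum_subset
        · apply Finset.Icc_subset_Icc_right
          simp only [Finset.HasAntidiagonal.mem_antidiagonal] at hp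
          omega
        · intro k hk hk'
          simp only [Finset.HasAntidiagonal.mem_antidiagonal] at hp
          simp only [Finset.mem_Icc] at hk hk'
          rw [coeff_pow_eq_zero hg0 (by omega : p.2 < k - 1)]
          ring
      rw [Finset.sum_congr rfl step1, Finset.sum_comm]
      have step2 : ∀ k ∈ Finset.Icc 1 (n + 1),
          ∑ p ∈ Finset.HasAntidiagonal.antidiagonal n, coeff p.1 g * (κ k * coeff p.2 (g ^ (k - 1)))
          = κ k * coeff n (g ^ k) := by
        intro k hk
        simp only [Finset.mem_Icc] at hk
        have : (g : PowerSeries ℂ) ^ k = g * g ^ (k - 1) := by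
          conv_lhs => rw [show k = (k - 1) + 1 by omega]
          rw [pow_succ']
        rw [this, coeff_mul, Finset.mul_sum]
        exact Finset.sum_congr rfl (fun p hp => by ring)
      rw [Finset.sum_congr rfl step2]
      rw [show Finset.Icc 1 (n + 1) = insert (n + 1) (Finset.Icc 1 n) by
        ext x; simp only [Finset.mem_Icc, Finset.mem_insert]; omega]
      rw [Finset.sum_insert (by simp)]
      rw [coeff_pow_eq_zero hg0 (by omega : n < n + 1), mul_zero, zero_add]
    rw [hcalc, key_induction κ g hgc n h 0, zero_add]
    exact Finset.sum_congr rfl (fun k _ => by norm_num)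

end NCAux

/-- If the moments `m_n` and free cumulants `κ_p` are related by
`m_n = Σ_{π ∈ NC(n)} Π_{V ∈ π} κ_{|V|}` (with `m_0 = 1`), then
`K(G(z)) = z` as formal Laurent series in `1/z`, where
`G(z) = Σ_{n≥0} m_n z^{-n-1}` and `K(w) = 1/w + Σ_{p≥1} κ_p w^{p-1}`.
Working in the field of Laurent series in `u = 1/z`, `G` is the image of the
power series `g = Σ m_n u^{n+1} = X · (Σ m_n X^n)`, `z = u^{-1}` is
`single (-1) 1`, and `K(G) = G⁻¹ + Σ_{p≥1} κ_p G^{p-1}`. -/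
theorem K_of_G_eq_z_of_momentCumulant (m κ : ℕ → ℂ) (hm0 : m 0 = 1)
    (hm : ∀ n : ℕ, 1 ≤ n → m n =
      ∑ π ∈ Finset.univ.filter
          (fun π : Finpartition (Finset.univ : Finset (Fin n)) => IsNonCrossing π),
        ∏ V ∈ π.parts, κ V.card) :
    (HahnSeries.ofPowerSeries ℤ ℂ (PowerSeries.X * PowerSeries.mk m))⁻¹ +
        HahnSeries.ofPowerSeries ℤ ℂ (RSeries κ (PowerSeries.X * PowerSeries.mk m)) =
      HahnSeries.single (-1 : ℤ) (1 : ℂ) := by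
  set g : PowerSeries ℂ := PowerSeries.X * PowerSeries.mk m with hgdef
  have hps : (PowerSeries.mk m : PowerSeries ℂ) = 1 + g * RSeries κ g :=
    powerSeries_identity m κ hm0 hm
  set Φ := HahnSeries.ofPowerSeries ℤ ℂ with hΦ
  have hgne : Φ g ≠ 0 := by
    intro h
    have : g = 0 := HahnSeries.ofPowerSeries_injective (by rw [h, map_zero])
    have h1 : PowerSeries.coeff 1 g = 0 := by rw [this, map_zero]
    rw [hgdef] at h1
    rw [PowerSeries.coeff_succ_X_mul, PowerSeries.coeff_mk, hm0] at h1
    exact one_ne_zero h1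
  have hmul : Φ g * HahnSeries.single (-1 : ℤ) (1 : ℂ) = Φ (PowerSeries.mk m) := by
    rw [hgdef, map_mul, HahnSeries.ofPowerSeries_X, mul_comm (HahnSeries.single 1 1),
      mul_assoc, HahnSeries.single_mul_single]
    norm_num
  have key : Φ g * ((Φ g)⁻¹ + Φ (RSeries κ g)) = Φ g * HahnSeries.single (-1 : ℤ) (1 : ℂ) := by
    rw [mul_add, mul_inv_cancel₀ hgne, hmul, ← map_mul, ← map_one (Φ), ← map_add, ← hps]
  exact mul_left_cancel₀ hgne key
end

section
/- Kreweras complementation: for every non-crossing partition π of {1,…,n}, the number of blocks of π plus the number of blocks of its Kreweras complement π* equals n + 1. -/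
/-- `i` and `j` lie in the same block of `π`. -/
def SameBlock {n : ℕ} (π : Finpartition (Finset.univ : Finset (Fin n)))
    (i j : Fin n) : Prop :=
  ∃ B ∈ π.parts, i ∈ B ∧ j ∈ B

/-- The point of `{1,…,n}` underlying a point of the interleaved set
`1 < 1̄ < 2 < 2̄ < ⋯ < n < n̄`, encoded as `Fin (2n)` with `k ↦ 2k` and
`k̄ ↦ 2k+1`. -/
def half {n : ℕ} (x : Fin (2 * n)) : Fin n :=
  ⟨x.val / 2, by omega⟩

/-- The same-block relation of the interleaved partition `π ∪ σ` of the
`2n`-element interleaved set, with `π` placed on the unbarred (even) points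
and `σ` on the barred (odd) points. -/
def InterleavedRel {n : ℕ} (π σ : Finpartition (Finset.univ : Finset (Fin n)))
    (x y : Fin (2 * n)) : Prop :=
  (x.val % 2 = 0 ∧ y.val % 2 = 0 ∧ SameBlock π (half x) (half y)) ∨
  (x.val % 2 = 1 ∧ y.val % 2 = 1 ∧ SameBlock σ (half x) (half y))

/-- A same-block relation on a linearly ordered set is non-crossing if there
are no `a < b < c < d` with `a, c` related, `b, d` related, but `a, b` in
different blocks (unrelated). -/
def RelNonCrossing {m : ℕ} (R : Fin m → Fin m → Prop) : Prop :=
  ¬ ∃ a b c d : Fin m, a < b ∧ b < c ∧ c < d ∧ R a c ∧ R b d ∧ ¬ R a b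


open Finset

namespace Krew

variable {n : ℕ}

/-- `(s, t]` (as a set of values) is a union of blocks of `π`. -/
def UB (π : Finpartition (Finset.univ : Finset (Fin n))) (s t : ℕ) : Prop :=
  ∀ B ∈ π.parts, ∀ x ∈ B, ∀ y ∈ B,
    (s < x.val ∧ x.val ≤ t) → (s < y.val ∧ y.val ≤ t)

def Krel (π : Finpartition (Finset.univ : Finset (Fin n))) (i j : Fin n) : Prop :=
  UB π (min i.val j.val) (max i.val j.val)

lemma krel_refl (π : Finpartition (Finset.univ : Finset (Fin n))) (i : Fin n) :
    Krel π i i := by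
  intro B hB x hx y hy hxy
  omega

lemma krel_symm {π : Finpartition (Finset.univ : Finset (Fin n))} {i j : Fin n}
    (h : Krel π i j) : Krel π j i := by
  unfold Krel at *
  rwa [min_comm, max_comm] at h

lemma krel_ub {π : Finpartition (Finset.univ : Finset (Fin n))} {i j : Fin n}
    (hij : i.val ≤ j.val) : Krel π i j ↔ UB π i.val j.val := by
  unfold Krel
  rw [min_eq_left hij, max_eq_right hij]

lemma ub_cat {π : Finpartition (Finset.univ : Finset (Fin n))} {s t u : ℕ}
    (hst : s ≤ t) (htu : t ≤ u) (h1 : UB π s t) (h2 : UB π t u) : UB π s u := by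
  intro B hB x hx y hy hxy
  rcases le_or_gt x.val t with hc | hc
  · have := h1 B hB x hx y hy ⟨hxy.1, hc⟩
    omega
  · have := h2 B hB x hx y hy ⟨hc, hxy.2⟩
    omega

lemma ub_left {π : Finpartition (Finset.univ : Finset (Fin n))} {s t u : ℕ}
    (htu : t ≤ u) (h1 : UB π s u) (h2 : UB π t u) : UB π s t := by
  intro B hB x hx y hy hxy
  have hy1 := h1 B hB x hx y hy ⟨hxy.1, le_trans hxy.2 htu⟩
  rcases le_or_gt y.val t with hc | hc
  · exact ⟨hy1.1, hc⟩
  · have := h2 B hB y hy x hx ⟨hc, hy1.2⟩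
    omega

lemma ub_right {π : Finpartition (Finset.univ : Finset (Fin n))} {s t u : ℕ}
    (hst : s ≤ t) (h1 : UB π s u) (h2 : UB π s t) : UB π t u := by
  intro B hB x hx y hy hxy
  have hy1 := h1 B hB x hx y hy ⟨lt_of_le_of_lt hst hxy.1, hxy.2⟩
  rcases le_or_gt y.val t with hc | hc
  · have := h2 B hB y hy x hx ⟨hy1.1, hc⟩
    omega
  · exact ⟨hc, hy1.2⟩

lemma krel_trans {π : Finpartition (Finset.univ : Finset (Fin n))} {i j k : Fin n}
    (h1 : Krel π i j) (h2 : Krel π j k) : Krel π i k := by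
  rcases le_total i.val j.val with h | h <;> rcases le_total j.val k.val with h' | h'
  · exact (krel_ub (le_trans h h')).2
      (ub_cat h h' ((krel_ub h).1 h1) ((krel_ub h').1 h2))
  · rcases le_total i.val k.val with h'' | h''
    · exact (krel_ub h'').2 (ub_left h' ((krel_ub h).1 h1) ((krel_ub h').1 (krel_symm h2)))
    · exact krel_symm ((krel_ub h'').2
        (ub_left h ((krel_ub h').1 (krel_symm h2)) ((krel_ub h).1 h1)))
  · rcases le_total i.val k.val with h'' | h''
    · exact (krel_ub h'').2 (ub_right h ((krel_ub h').1 h2) ((krel_ub h).1 (krel_symm h1)))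
    · exact krel_symm ((krel_ub h'').2
        (ub_right h' ((krel_ub h).1 (krel_symm h1)) ((krel_ub h').1 h2)))
  · exact krel_symm ((krel_ub (le_trans h' h)).2
      (ub_cat h' h ((krel_ub h').1 (krel_symm h2)) ((krel_ub h).1 (krel_symm h1))))

lemma sameBlock_symm {π : Finpartition (Finset.univ : Finset (Fin n))} {i j : Fin n}
    (h : SameBlock π i j) : SameBlock π j i := by
  obtain ⟨B, hB, hi, hj⟩ := h
  exact ⟨B, hB, hj, hi⟩

lemma sameBlock_iff_mem_part {π : Finpartition (Finset.univ : Finset (Fin n))} {i j : Fin n} :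
    SameBlock π i j ↔ j ∈ π.part i := by
  constructor
  · rintro ⟨B, hB, hi, hj⟩
    rwa [π.eq_of_mem_parts (π.part_mem.2 (mem_univ i)) hB (π.mem_part (mem_univ i)) hi]
  · intro h
    exact ⟨π.part i, π.part_mem.2 (mem_univ i), π.mem_part (mem_univ i), h⟩

/-- The Kreweras setoid. -/
def ksetoid (π : Finpartition (Finset.univ : Finset (Fin n))) : Setoid (Fin n) :=
  ⟨Krel π, ⟨krel_refl π, krel_symm, krel_trans⟩⟩

open scoped Classical in
/-- The Kreweras complement as a finpartition. -/
noncomputable def kcomp (π : Finpartition (Finset.univ : Finset (Fin n))) :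
    Finpartition (Finset.univ : Finset (Fin n)) :=
  Finpartition.ofSetoid (ksetoid π)

lemma sameBlock_kcomp {π : Finpartition (Finset.univ : Finset (Fin n))} {i j : Fin n} :
    SameBlock (kcomp π) i j ↔ Krel π i j := by
  classical
  rw [sameBlock_iff_mem_part]
  unfold kcomp
  rw [Finpartition.mem_part_ofSetoid_iff_rel]
  rfl

lemma half_mk_even (k : Fin n) (h : 2 * k.val < 2 * n) :
    half (⟨2 * k.val, h⟩ : Fin (2 * n)) = k := by
  apply Fin.ext
  show 2 * k.val / 2 = k.val
  omega

lemma half_mk_odd (k : Fin n) (h : 2 * k.val + 1 < 2 * n) :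
    half (⟨2 * k.val + 1, h⟩ : Fin (2 * n)) = k := by
  apply Fin.ext
  show (2 * k.val + 1) / 2 = k.val
  omega

lemma ub_nest {π : Finpartition (Finset.univ : Finset (Fin n))} {s t u v : ℕ}
    (h1 : UB π s u) (h2 : UB π t v) (htu : t ≤ u) (huv : u ≤ v) : UB π s t := by
  intro B hB x hx y hy hxy
  have hy1 := h1 B hB x hx y hy ⟨hxy.1, le_trans hxy.2 htu⟩
  rcases le_or_gt y.val t with hc | hc
  · exact ⟨hy1.1, hc⟩
  · have := h2 B hB y hy x hx ⟨hc, le_trans hy1.2 huv⟩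
    omega

lemma sameBlock_to_krel_aux {π σ : Finpartition (Finset.univ : Finset (Fin n))}
    (hσ : RelNonCrossing (InterleavedRel π σ)) {i j : Fin n} (hij : i.val ≤ j.val)
    (h : SameBlock σ i j) : Krel π i j := by
  rw [krel_ub hij]
  intro B hB x hx y hy hxy
  by_contra hy'
  have hxy' : ¬ (i.val < y.val ∧ y.val ≤ j.val) := hy'
  have hiltj : i.val < j.val := by omega
  rcases le_or_gt y.val i.val with hc | hc
  · -- y ≤ i < x ≤ j ; points 2y < 2i+1 < 2x < 2j+1
    refine hσ ⟨⟨2 * y.val, by omega⟩, ⟨2 * i.val + 1, by omega⟩,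
      ⟨2 * x.val, by omega⟩, ⟨2 * j.val + 1, by omega⟩,
      Fin.mk_lt_mk.mpr (by omega), Fin.mk_lt_mk.mpr (by omega),
      Fin.mk_lt_mk.mpr (by omega), ?_, ?_, ?_⟩
    · refine Or.inl ⟨by first | (simp; omega) | simp | omega, by first | (simp; omega) | simp | omega, ?_⟩
      rw [half_mk_even, half_mk_even]
      exact ⟨B, hB, hy, hx⟩
    · refine Or.inr ⟨by first | (simp; omega) | simp | omega, by first | (simp; omega) | simp | omega, ?_⟩
      rw [half_mk_odd, half_mk_odd]
      exact h
    · rintro (⟨h1, h2, -⟩ | ⟨h1, h2, -⟩) <;> first | (simp at h1 h2; omega) | (simp at h1 h2) | omega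
  · -- i < x ≤ j < y ; points 2i+1 < 2x < 2j+1 < 2y
    have hjy : j.val < y.val := by omega
    refine hσ ⟨⟨2 * i.val + 1, by omega⟩, ⟨2 * x.val, by omega⟩,
      ⟨2 * j.val + 1, by omega⟩, ⟨2 * y.val, by omega⟩,
      Fin.mk_lt_mk.mpr (by omega), Fin.mk_lt_mk.mpr (by omega),
      Fin.mk_lt_mk.mpr (by omega), ?_, ?_, ?_⟩
    · refine Or.inr ⟨by first | (simp; omega) | simp | omega, by first | (simp; omega) | simp | omega, ?_⟩
      rw [half_mk_odd, half_mk_odd]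
      exact h
    · refine Or.inl ⟨by first | (simp; omega) | simp | omega, by first | (simp; omega) | simp | omega, ?_⟩
      rw [half_mk_even, half_mk_even]
      exact ⟨B, hB, hx, hy⟩
    · rintro (⟨h1, h2, -⟩ | ⟨h1, h2, -⟩) <;> first | (simp at h1 h2; omega) | (simp at h1 h2) | omega

lemma sameBlock_to_krel {π σ : Finpartition (Finset.univ : Finset (Fin n))}
    (hσ : RelNonCrossing (InterleavedRel π σ)) {i j : Fin n}
    (h : SameBlock σ i j) : Krel π i j := by
  rcases le_total i.val j.val with hij | hij
  · exact sameBlock_to_krel_aux hσ hij h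
  · exact krel_symm (sameBlock_to_krel_aux hσ hij (sameBlock_symm h))

lemma kcomp_noncrossing {π : Finpartition (Finset.univ : Finset (Fin n))}
    (hπ : IsNonCrossing π) : RelNonCrossing (InterleavedRel π (kcomp π)) := by
  rintro ⟨a, b, c, d, hab, hbc, hcd, hac, hbd, hnab⟩
  have hab' : a.val < b.val := hab
  have hbc' : b.val < c.val := hbc
  have hcd' : c.val < d.val := hcd
  have hva : (half a).val = a.val / 2 := rfl
  have hvb : (half b).val = b.val / 2 := rfl
  have hvc : (half c).val = c.val / 2 := rfl
  have hvd : (half d).val = d.val / 2 := rfl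
  rcases hac with ⟨pa, pc, sac⟩ | ⟨pa, pc, kac⟩ <;>
    rcases hbd with ⟨pb, pd, sbd⟩ | ⟨pb, pd, kbd⟩
  · obtain ⟨B, hB, hmA, hmC⟩ := sac
    obtain ⟨B', hB', hmB, hmD⟩ := sbd
    refine hπ ⟨half a, half b, half c, half d, Fin.lt_def.mpr (by omega),
      Fin.lt_def.mpr (by omega), Fin.lt_def.mpr (by omega),
      B, hB, B', hB', ?_, hmA, hmC, hmB, hmD⟩
    rintro rfl
    exact hnab (Or.inl ⟨pa, pb, ⟨B, hB, hmA, hmB⟩⟩)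
  · obtain ⟨B, hB, hmA, hmC⟩ := sac
    have kr := sameBlock_kcomp.mp kbd
    have ub := (krel_ub (show (half b).val ≤ (half d).val by omega)).1 kr
    have := ub B hB (half c) hmC (half a) hmA ⟨by omega, by omega⟩
    omega
  · obtain ⟨B, hB, hmB, hmD⟩ := sbd
    have kr := sameBlock_kcomp.mp kac
    have ub := (krel_ub (show (half a).val ≤ (half c).val by omega)).1 kr
    have := ub B hB (half b) hmB (half d) hmD ⟨by omega, by omega⟩
    omega
  · refine hnab (Or.inr ⟨pa, pb, ?_⟩)
    rw [sameBlock_kcomp]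
    have kac' := sameBlock_kcomp.mp kac
    have kbd' := sameBlock_kcomp.mp kbd
    rw [krel_ub (show (half a).val ≤ (half b).val by omega)]
    exact ub_nest ((krel_ub (by omega)).1 kac') ((krel_ub (by omega)).1 kbd')
      (by omega) (by omega)

lemma krel_to_sameBlock {π σ : Finpartition (Finset.univ : Finset (Fin n))}
    (hπ : IsNonCrossing π)
    (hmax : ∀ σ' : Finpartition (Finset.univ : Finset (Fin n)),
      RelNonCrossing (InterleavedRel π σ') → σ' ≤ σ)
    {i j : Fin n} (h : Krel π i j) : SameBlock σ i j := by
  have hle := hmax (kcomp π) (kcomp_noncrossing hπ)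
  have hj : j ∈ (kcomp π).part i := sameBlock_iff_mem_part.mp (sameBlock_kcomp.mpr h)
  obtain ⟨C, hC, hsub⟩ := hle ((kcomp π).part_mem.2 (mem_univ i))
  exact ⟨C, hC, hsub ((kcomp π).mem_part (mem_univ i)), hsub hj⟩

open scoped Classical in
lemma card_parts_min (P : Finpartition (Finset.univ : Finset (Fin n))) :
    P.parts.card = (univ.filter (fun i : Fin n => ∀ j, SameBlock P j i → i ≤ j)).card := by
  refine Finset.card_bij (fun B hB => B.min' (P.nonempty_of_mem_parts hB)) ?_ ?_ ?_
  · intro B hB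
    rw [mem_filter]
    refine ⟨mem_univ _, fun j hj => ?_⟩
    obtain ⟨C, hC, hjC, hmC⟩ := hj
    have hBC : B = C := P.eq_of_mem_parts hB hC (B.min'_mem _) hmC
    exact B.min'_le j (hBC ▸ hjC)
  · intro B hB B' hB' h
    exact P.eq_of_mem_parts hB hB' (B.min'_mem _) (h ▸ B'.min'_mem _)
  · intro i hi
    rw [mem_filter] at hi
    obtain ⟨B, hB, hiB⟩ := P.exists_mem (mem_univ i)
    refine ⟨B, hB, le_antisymm (B.min'_le i hiB) ?_⟩
    exact hi.2 _ ⟨B, hB, B.min'_mem _, hiB⟩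

open scoped Classical in
lemma card_parts_max (P : Finpartition (Finset.univ : Finset (Fin n))) :
    P.parts.card = (univ.filter (fun i : Fin n => ∀ j, SameBlock P i j → j ≤ i)).card := by
  refine Finset.card_bij (fun B hB => B.max' (P.nonempty_of_mem_parts hB)) ?_ ?_ ?_
  · intro B hB
    rw [mem_filter]
    refine ⟨mem_univ _, fun j hj => ?_⟩
    obtain ⟨C, hC, hmC, hjC⟩ := hj
    have hBC : B = C := P.eq_of_mem_parts hB hC (B.max'_mem _) hmC
    exact B.le_max' j (hBC ▸ hjC)
  · intro B hB B' hB' h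
    exact P.eq_of_mem_parts hB hB' (B.max'_mem _) (h ▸ B'.max'_mem _)
  · intro i hi
    rw [mem_filter] at hi
    obtain ⟨B, hB, hiB⟩ := P.exists_mem (mem_univ i)
    refine ⟨B, hB, le_antisymm ?_ (B.le_max' i hiB)⟩
    exact hi.2 _ ⟨B, hB, hiB, B.max'_mem _⟩

/-- The heart of the argument: for `0 < t`, `t` is the minimum of its `π`-block
iff the interval `(t-1, j]` is a union of blocks for some `j ≥ t`. -/
lemma min_iff_ub {π : Finpartition (Finset.univ : Finset (Fin n))}
    (hπ : IsNonCrossing π) {t : Fin n} (ht : 0 < t.val) :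
    (∀ j, SameBlock π j t → t ≤ j) ↔
      ∃ j : Fin n, t.val ≤ j.val ∧ UB π (t.val - 1) j.val := by
  constructor
  · intro hmin
    obtain ⟨B, hB, htB⟩ := π.exists_mem (mem_univ t)
    have hne := π.nonempty_of_mem_parts hB
    refine ⟨B.max' hne, B.le_max' t htB, ?_⟩
    intro B' hB' x hx y hy hxy
    by_cases hBB : B' = B
    · subst hBB
      have h1 : t ≤ y := hmin y ⟨B', hB', hy, htB⟩
      have h1' : t.val ≤ y.val := h1
      have h2 : y.val ≤ (B'.max' hne).val := B'.le_max' y hy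
      exact ⟨by omega, h2⟩
    · have hxt : x.val ≠ t.val := fun hEq => hBB (π.eq_of_mem_parts hB' hB
        (by rwa [show x = t from Fin.ext hEq] at hx) htB)
      have hxm : x.val ≠ (B.max' hne).val := fun hEq => hBB (π.eq_of_mem_parts hB' hB
        (by rwa [show x = B.max' hne from Fin.ext hEq] at hx) (B.max'_mem hne))
      have htm : t.val ≤ (B.max' hne).val := B.le_max' t htB
      by_contra hy'
      rcases (by omega : y.val < t.val ∨ (B.max' hne).val < y.val) with hc | hc
      · exact hπ ⟨y, t, x, B.max' hne, Fin.lt_def.mpr hc, Fin.lt_def.mpr (by omega),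
          Fin.lt_def.mpr (by omega), B', hB', B, hB, hBB, hy, hx, htB, B.max'_mem hne⟩
      · exact hπ ⟨t, x, B.max' hne, y, Fin.lt_def.mpr (by omega),
          Fin.lt_def.mpr (by omega), Fin.lt_def.mpr hc, B, hB, B', hB',
          fun hEq => hBB hEq.symm, htB, B.max'_mem hne, hx, hy⟩
  · rintro ⟨j, htj, hub⟩ x hsb
    obtain ⟨B, hB, hxB, htB⟩ := hsb
    have := hub B hB t htB x hxB ⟨by omega, htj⟩
    exact Fin.le_def.mpr (by omega)

/-- For `0 < t`, `t` is the min of its `π`-block iff `t-1` is not the max of its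
`σ`-block. -/
lemma key {π σ : Finpartition (Finset.univ : Finset (Fin n))}
    (hπ : IsNonCrossing π)
    (hσ : RelNonCrossing (InterleavedRel π σ))
    (hmax : ∀ σ' : Finpartition (Finset.univ : Finset (Fin n)),
      RelNonCrossing (InterleavedRel π σ') → σ' ≤ σ)
    {t : Fin n} (ht : 0 < t.val) :
    (∀ j, SameBlock π j t → t ≤ j) ↔
      ¬ (∀ j, SameBlock σ (⟨t.val - 1, by omega⟩ : Fin n) j →
          j ≤ (⟨t.val - 1, by omega⟩ : Fin n)) := by
  rw [min_iff_ub hπ ht]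
  constructor
  · rintro ⟨j, htj, hub⟩ hmaxσ
    have hkr : Krel π (⟨t.val - 1, by omega⟩ : Fin n) j := by
      rw [krel_ub (show t.val - 1 ≤ j.val by omega)]
      exact hub
    have := hmaxσ j (krel_to_sameBlock hπ hmax hkr)
    have : j.val ≤ t.val - 1 := this
    omega
  · intro hnot
    push_neg at hnot
    obtain ⟨j, hsb, hj⟩ := hnot
    have hj' : t.val - 1 < j.val := hj
    have hkr := sameBlock_to_krel hσ hsb
    rw [krel_ub (show (⟨t.val - 1, by omega⟩ : Fin n).val ≤ j.val by
      simpa using le_of_lt hj')] at hkr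
    exact ⟨j, by omega, hkr⟩

open scoped Classical in
lemma count (n : ℕ) (hn : 1 ≤ n)
    (π σ : Finpartition (Finset.univ : Finset (Fin n)))
    (hπ : IsNonCrossing π)
    (hσ : RelNonCrossing (InterleavedRel π σ))
    (hmax : ∀ σ' : Finpartition (Finset.univ : Finset (Fin n)),
      RelNonCrossing (InterleavedRel π σ') → σ' ≤ σ) :
    π.parts.card + σ.parts.card = n + 1 := by
  have h1 := card_parts_min π
  have h2 := card_parts_max σ
  set A : Finset ℕ := (univ.filter (fun i : Fin n => ∀ j, SameBlock π j i → i ≤ j)).map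
    ⟨Fin.val, Fin.val_injective⟩ with hA
  set Bs : Finset ℕ := (univ.filter (fun i : Fin n => ∀ j, SameBlock σ i j → j ≤ i)).map
    ⟨fun i => i.val + 1, fun a b h => Fin.val_injective (Nat.succ_injective h)⟩ with hB
  have hmemA : ∀ tn : ℕ, tn ∈ A ↔ ∃ i : Fin n, (∀ j, SameBlock π j i → i ≤ j) ∧ i.val = tn := by
    intro tn
    simp [hA]
  have hmemB : ∀ tn : ℕ, tn ∈ Bs ↔
      ∃ i : Fin n, (∀ j, SameBlock σ i j → j ≤ i) ∧ i.val + 1 = tn := by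
    intro tn
    simp [hB]
    exact Iff.rfl
  have hdisj : Disjoint A Bs := by
    rw [Finset.disjoint_left]
    intro tn hta htb
    rw [hmemA] at hta
    rw [hmemB] at htb
    obtain ⟨i, hMin, hiv⟩ := hta
    obtain ⟨i', hMax, hiv'⟩ := htb
    have ht : 0 < i.val := by omega
    refine (key hπ hσ hmax ht).mp hMin ?_
    have hii : (⟨i.val - 1, by omega⟩ : Fin n) = i' := Fin.ext (by simp; omega)
    rw [hii]
    exact hMax
  have hunion : A ∪ Bs = Finset.range (n + 1) := by
    ext tn
    rw [Finset.mem_union, hmemA, hmemB, Finset.mem_range]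
    constructor
    · rintro (⟨i, -, rfl⟩ | ⟨i, -, rfl⟩) <;> · have := i.isLt; omega
    · intro htn
      rcases Nat.eq_zero_or_pos tn with rfl | htpos
      · exact Or.inl ⟨⟨0, by omega⟩, fun j _ => Fin.le_def.mpr (Nat.zero_le _), rfl⟩
      · by_cases htn2 : tn = n
        · subst htn2
          refine Or.inr ⟨⟨tn - 1, by omega⟩, fun j _ => Fin.le_def.mpr ?_,
            by show tn - 1 + 1 = tn; omega⟩
          have := j.isLt
          simp
          omega
        · have htlt : tn < n := by omega
          by_cases hmin : (∀ j, SameBlock π j ⟨tn, htlt⟩ → (⟨tn, htlt⟩ : Fin n) ≤ j)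
          · exact Or.inl ⟨⟨tn, htlt⟩, hmin, rfl⟩
          · refine Or.inr ⟨⟨tn - 1, by omega⟩, ?_, by show tn - 1 + 1 = tn; omega⟩
            by_contra hmaxn
            exact hmin ((key hπ hσ hmax (show 0 < (⟨tn, htlt⟩ : Fin n).val from htpos)).mpr
              (by simpa using hmaxn))
  have hAcard : A.card = (univ.filter (fun i : Fin n => ∀ j, SameBlock π j i → i ≤ j)).card :=
    Finset.card_map _
  have hBcard : Bs.card = (univ.filter (fun i : Fin n => ∀ j, SameBlock σ i j → j ≤ i)).card :=
    Finset.card_map _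
  rw [h1, h2, ← hAcard, ← hBcard, ← Finset.card_union_of_disjoint hdisj, hunion,
    Finset.card_range]

end Krew

/-- Kreweras complementation.  For a non-crossing partition `π`
of `{1,…,n}`, its Kreweras complement `σ = π*` — the largest partition of the
barred copy `{1̄,…,n̄}` such that `π ∪ σ` is non-crossing on the interleaved
`2n`-element set — satisfies `|π| + |π*| = n + 1` (blocks counted). -/
theorem kreweras_block_count (n : ℕ) (hn : 1 ≤ n)
    (π σ : Finpartition (Finset.univ : Finset (Fin n)))
    (hπ : IsNonCrossing π)
    (hσ : RelNonCrossing (InterleavedRel π σ))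
    (hmax : ∀ σ' : Finpartition (Finset.univ : Finset (Fin n)),
      RelNonCrossing (InterleavedRel π σ') → σ' ≤ σ) :
    π.parts.card + σ.parts.card = n + 1 :=
  Krew.count n hn π σ hπ hσ hmax
end
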